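/- arXiv:1202.6308 — 7 statements merged into one kernel-verified Lean document; each statement's English description precedes it below -/
import Mathlib

section
/- Let f and g be polynomials in ℤ[x]. The reduced resultant of f and g is zero if and only if f and g have a common nonconstant factor in ℤ[x]. -/
open Polynomial

/-- Descent lemma: if `p` is primitive and `map p` is a unit multiple of `q`, and
`q` divides `map h` over `ℚ`, then `p ∣ h` in `ℤ[X]`. -/
theorem aux_descent {p h : Polynomial ℤ} {q : Polynomial ℚ} {c : ℚ} (hp : p.IsPrimitive)
    (hc : c ≠ 0) (hpq : p.map (Int.castRingHom ℚ) = C c * q)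
    (hq : q ∣ h.map (Int.castRingHom ℚ)) : p ∣ h := by
  by_cases h0 : h = 0
  · simp [h0]
  have hassoc : Associated q (p.map (Int.castRingHom ℚ)) := by
    obtain ⟨u, hu⟩ := (isUnit_C.2 (isUnit_iff_ne_zero.2 hc))
    exact ⟨u, by rw [hu, mul_comm, hpq]⟩
  have h1 : p.map (Int.castRingHom ℚ) ∣ h.map (Int.castRingHom ℚ) :=
    (hassoc.symm.dvd).trans hq
  have hcont : (h.content : ℚ) ≠ 0 := by
    exact_mod_cast fun hco => h0 (content_eq_zero_iff.1 (by exact_mod_cast hco))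
  have h2 : h.map (Int.castRingHom ℚ)
      = C (h.content : ℚ) * h.primPart.map (Int.castRingHom ℚ) := by
    conv_lhs => rw [h.eq_C_content_mul_primPart]
    rw [Polynomial.map_mul, Polynomial.map_C]
    rfl
  have h3 : p.map (Int.castRingHom ℚ) ∣ h.primPart.map (Int.castRingHom ℚ) := by
    rw [h2] at h1
    exact ((isUnit_C.2 (isUnit_iff_ne_zero.2 hcont)).dvd_mul_left).1 h1
  have h4 : p ∣ h.primPart :=
    (IsPrimitive.Int.dvd_iff_map_cast_dvd_map_cast p h.primPart hp
      ).2 h3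
  exact h4.trans h.primPart_dvd

/-- The reduced resultant of `f` and `g` is zero if and only if `f` and `g`
have a common nonconstant factor in `ℤ[x]`. -/
theorem reducedResultant_eq_zero_iff (f g : Polynomial ℤ) (n : ℕ)
    (hn : Ideal.comap (Int.castRingHom (Polynomial ℤ)) (Ideal.span {f, g})
        = Ideal.span {(n : ℤ)}) :
    n = 0 ↔ ∃ d : Polynomial ℤ, 0 < d.natDegree ∧ d ∣ f ∧ d ∣ g := by
  classical
  constructor
  · intro h0
    subst h0
    have hbot : Ideal.comap (Int.castRingHom (Polynomial ℤ)) (Ideal.span {f, g}) = ⊥ := by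
      rw [hn]; simp
    have hmem : ∀ m : ℤ, (C m : Polynomial ℤ) ∈ Ideal.span ({f, g} : Set (Polynomial ℤ))
        → m = 0 := by
      intro m hm
      have hCm : (Int.castRingHom (Polynomial ℤ)) m = C m := by
        rw [eq_intCast, ← C_eq_intCast, Int.cast_id]
      have : m ∈ Ideal.comap (Int.castRingHom (Polynomial ℤ)) (Ideal.span {f, g}) := by
        rw [Ideal.mem_comap, hCm]; exact hm
      rw [hbot] at this
      simpa using this
    by_cases hfg : f = 0 ∧ g = 0
    · exact ⟨X, by simp, hfg.1 ▸ dvd_zero X, hfg.2 ▸ dvd_zero X⟩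
    have hinj : Function.Injective (Int.castRingHom ℚ) := Int.cast_injective
    have hmapinj : Function.Injective (Polynomial.map (Int.castRingHom ℚ)) :=
      Polynomial.map_injective _ hinj
    -- f and g are not coprime over ℚ
    have hnc : ¬ IsCoprime (f.map (Int.castRingHom ℚ)) (g.map (Int.castRingHom ℚ)) := by
      rintro ⟨a, b, hab⟩
      obtain ⟨⟨s, hs0⟩, hs⟩ := IsLocalization.integerNormalization_map_to_map
        (nonZeroDivisors ℤ) a
      obtain ⟨⟨t, ht0⟩, ht⟩ := IsLocalization.integerNormalization_map_to_map
        (nonZeroDivisors ℤ) b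
      set A := IsLocalization.integerNormalization (nonZeroDivisors ℤ) a with hA
      set B := IsLocalization.integerNormalization (nonZeroDivisors ℤ) b with hB
      have hs' : A.map (Int.castRingHom ℚ) = C (s : ℚ) * a := by
        rw [show Int.castRingHom ℚ = algebraMap ℤ ℚ from rfl, hs, Algebra.smul_def,
          Polynomial.algebraMap_apply, algebraMap_int_eq, eq_intCast]
      have ht' : B.map (Int.castRingHom ℚ) = C (t : ℚ) * b := by
        rw [show Int.castRingHom ℚ = algebraMap ℤ ℚ from rfl, ht, Algebra.smul_def,
          Polynomial.algebraMap_apply, algebraMap_int_eq, eq_intCast]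
      have key : (C (s * t) : Polynomial ℤ) = (C t * A) * f + (C s * B) * g := by
        apply hmapinj
        simp only [Polynomial.map_add, Polynomial.map_mul, Polynomial.map_C, hs', ht']
        rw [show (Int.castRingHom ℚ) (s * t) = (s : ℚ) * (t : ℚ) by simp,
          show (Int.castRingHom ℚ) s = (s : ℚ) from rfl,
          show (Int.castRingHom ℚ) t = (t : ℚ) from rfl, map_mul]
        linear_combination (- C (s : ℚ) * C (t : ℚ)) * hab
      have hst : s * t = 0 := by
        apply hmem
        rw [key]
        exact Ideal.mem_span_pair.2 ⟨C t * A, C s * B, rfl⟩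
      have hs1 : s ≠ 0 := nonZeroDivisors.ne_zero hs0
      have ht1 : t ≠ 0 := nonZeroDivisors.ne_zero ht0
      exact (mul_ne_zero hs1 ht1) hst
    -- take the gcd over ℚ
    set q := EuclideanDomain.gcd (f.map (Int.castRingHom ℚ)) (g.map (Int.castRingHom ℚ))
      with hqdef
    have hq0 : q ≠ 0 := by
      intro h
      rw [hqdef, EuclideanDomain.gcd_eq_zero_iff] at h
      apply hfg
      constructor
      · apply hmapinj; simpa using h.1
      · apply hmapinj; simpa using h.2
    have hqu : ¬ IsUnit q := fun h => hnc (EuclideanDomain.gcd_isUnit_iff.1 h)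
    have hqdeg : 0 < q.natDegree := by
      rcases Nat.eq_zero_or_pos q.natDegree with h | h
      · exfalso
        apply hqu
        rw [Polynomial.eq_C_of_natDegree_eq_zero h]
        exact isUnit_C.2 (isUnit_iff_ne_zero.2 (fun hc => hq0 (by
          rw [Polynomial.eq_C_of_natDegree_eq_zero h, hc, map_zero])))
      · exact h
    -- clear denominators of q and take the primitive part
    obtain ⟨⟨s, hs0⟩, hs⟩ := IsLocalization.integerNormalization_map_to_map
      (nonZeroDivisors ℤ) q
    set Q := IsLocalization.integerNormalization (nonZeroDivisors ℤ) q with hQ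
    have hs1 : (s : ℚ) ≠ 0 := by exact_mod_cast nonZeroDivisors.ne_zero hs0
    have hs' : Q.map (Int.castRingHom ℚ) = C (s : ℚ) * q := by
      rw [show Int.castRingHom ℚ = algebraMap ℤ ℚ from rfl, hs, Algebra.smul_def,
        Polynomial.algebraMap_apply, algebraMap_int_eq, eq_intCast]
    have hQ0 : Q ≠ 0 := by
      intro h
      rw [h] at hs'
      simp only [Polynomial.map_zero] at hs'
      exact mul_ne_zero (fun hc => hs1 (by simpa using congrArg (fun p => coeff p 0) hc)) hq0
        hs'.symm
    have hcont : (Q.content : ℚ) ≠ 0 := by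
      exact_mod_cast fun hco => hQ0 (content_eq_zero_iff.1 (by exact_mod_cast hco))
    set p := Q.primPart with hpdef
    have hpmap : p.map (Int.castRingHom ℚ) = C ((s : ℚ) / (Q.content : ℚ)) * q := by
      have : Q.map (Int.castRingHom ℚ)
          = C (Q.content : ℚ) * p.map (Int.castRingHom ℚ) := by
        conv_lhs => rw [Q.eq_C_content_mul_primPart]
        rw [Polynomial.map_mul, Polynomial.map_C]
        rfl
      rw [hs'] at this
      have hcc : (Q.content : ℚ) * ((s : ℚ) / (Q.content : ℚ)) = (s : ℚ) := by field_simp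
      apply mul_left_cancel₀ (C_ne_zero.2 hcont)
      rw [← this, ← mul_assoc, ← map_mul, hcc]
    have hcdiv : (s : ℚ) / (Q.content : ℚ) ≠ 0 := div_ne_zero hs1 hcont
    refine ⟨p, ?_, ?_, ?_⟩
    · have h1 : p.natDegree = (p.map (Int.castRingHom ℚ)).natDegree :=
        (natDegree_map_eq_of_injective hinj p).symm
      rw [h1, hpmap]
      rwa [natDegree_mul (C_ne_zero.2 hcdiv) hq0, natDegree_C, zero_add]
    · exact aux_descent Q.isPrimitive_primPart hcdiv hpmap (EuclideanDomain.gcd_dvd_left _ _)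
    · exact aux_descent Q.isPrimitive_primPart hcdiv hpmap (EuclideanDomain.gcd_dvd_right _ _)
  · rintro ⟨d, hd, hdf, hdg⟩
    have hsub : Ideal.span ({f, g} : Set (Polynomial ℤ)) ≤ Ideal.span {d} := by
      rw [Ideal.span_le]
      rintro x (rfl | rfl)
      · exact Ideal.mem_span_singleton.2 hdf
      · exact Ideal.mem_span_singleton.2 hdg
    have hmem : (C (n : ℤ) : Polynomial ℤ) ∈ Ideal.span ({d} : Set (Polynomial ℤ)) := by
      apply hsub
      have h1 : (n : ℤ) ∈ Ideal.span {(n : ℤ)} := Ideal.mem_span_singleton_self _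
      rw [← hn] at h1
      have hCm : (Int.castRingHom (Polynomial ℤ)) (n : ℤ) = C (n : ℤ) := by
        rw [eq_intCast, ← C_eq_intCast, Int.cast_id]
      rw [Ideal.mem_comap, hCm] at h1
      exact h1
    rw [Ideal.mem_span_singleton] at hmem
    by_contra hne
    have hn0 : (C (n : ℤ) : Polynomial ℤ) ≠ 0 := by
      simp only [ne_eq, C_eq_zero, Nat.cast_eq_zero]
      exact hne
    have := natDegree_le_of_dvd hmem hn0
    rw [natDegree_C] at this
    omega
end

section
/- Let f and g be monic polynomials in ℤ[x] and let p be a prime number. Then p divides the resultant of f and g if and only if p divides the reduced resultant of f and g. -/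
open Polynomial Matrix

noncomputable def sylAux {R : Type*} [CommRing R] (f g : R[X]) (a b : ℕ) :
    Matrix (Fin (b + a)) (Fin (b + a)) R :=
  Matrix.of fun i j =>
    if (i : ℕ) < b then
      (if (i : ℕ) ≤ (j : ℕ) then f.coeff ((j : ℕ) - (i : ℕ)) else 0)
    else
      (if (i : ℕ) - b ≤ (j : ℕ) then g.coeff ((j : ℕ) - ((i : ℕ) - b)) else 0)

/-- The Sylvester-matrix resultant of two integer polynomials. -/
noncomputable def sylvesterResultant (f g : Polynomial ℤ) : ℤ :=
  Matrix.det (Matrix.of fun i j : Fin (g.natDegree + f.natDegree) =>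
    if (i : ℕ) < g.natDegree then
      (if (i : ℕ) ≤ (j : ℕ) then f.coeff ((j : ℕ) - (i : ℕ)) else 0)
    else
      (if (i : ℕ) - g.natDegree ≤ (j : ℕ) then
        g.coeff ((j : ℕ) - ((i : ℕ) - g.natDegree)) else 0))

lemma sylvesterResultant_eq (f g : ℤ[X]) :
    sylvesterResultant f g = (sylAux f g f.natDegree g.natDegree).det := rfl

lemma sylAux_map {R S : Type*} [CommRing R] [CommRing S] (φ : R →+* S) (f g : R[X]) (a b : ℕ) :
    (sylAux f g a b).map φ = sylAux (f.map φ) (g.map φ) a b := by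
  ext i j
  simp [sylAux, apply_ite φ, Polynomial.coeff_map]

lemma vpoly_eq {F : Type*} [CommRing F] (a : F[X]) (n : ℕ) (h : a.natDegree < n) :
    ∑ i : Fin n, C (a.coeff (i : ℕ)) * X ^ (i : ℕ) = a := by
  rw [Fin.sum_univ_eq_sum_range (fun i => C (a.coeff i) * X ^ i) n]
  simp_rw [C_mul_X_pow_eq_monomial]
  exact (Polynomial.as_sum_range' a n h).symm

lemma sylAux_det_mem {R : Type*} [CommRing R] (f g : R[X]) (hf : f.Monic) :
    (C ((sylAux f g f.natDegree g.natDegree).det) : R[X]) ∈ Ideal.span ({f, g} : Set R[X]) := by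
  set m := f.natDegree with hm
  set k := g.natDegree with hk
  rcases Nat.eq_zero_or_pos (k + m) with hN | hN
  · have hm0 : m = 0 := by omega
    have hf1 : f = 1 := hf.natDegree_eq_zero.mp hm0
    have h1 : (1 : R[X]) ∈ Ideal.span ({f, g} : Set R[X]) :=
      hf1 ▸ Ideal.subset_span (Set.mem_insert _ _)
    exact Ideal.eq_top_iff_one _ |>.mpr h1 ▸ Submodule.mem_top
  · haveI : NeZero (k + m) := ⟨by omega⟩
    set T : Matrix (Fin (k + m)) (Fin (k + m)) R[X] :=
      (sylAux f g m k).map (C : R →+* R[X]) with hT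
    have hdet : (C ((sylAux f g m k).det) : R[X]) = T.det :=
      RingHom.map_det (C : R →+* R[X]) (sylAux f g m k)
    have hcol : T.det = (T.updateCol 0 fun r => ∑ i : Fin (k + m), ((X : R[X]) ^ (i : ℕ)) • T r i).det := by
      rw [Matrix.det_updateCol_sum T 0 (fun i : Fin (k + m) => (X : R[X]) ^ (i : ℕ))]
      simp
    -- value of the new column
    have hcolval : ∀ r : Fin (k + m), (∑ i : Fin (k + m), ((X : R[X]) ^ (i : ℕ)) • T r i) ∈
        Ideal.span ({f, g} : Set R[X]) := by
      intro r
      by_cases hr : (r : ℕ) < k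
      · have heq : (∑ i : Fin (k + m), ((X : R[X]) ^ (i : ℕ)) • T r i) = f * X ^ (r : ℕ) := by
          have hdeg : (f * X ^ (r : ℕ)).natDegree < k + m := by
            calc (f * X ^ (r : ℕ)).natDegree ≤ m + r :=
              le_trans (natDegree_mul_le) (add_le_add le_rfl (natDegree_X_pow_le _))
            _ < k + m := by omega
          rw [← vpoly_eq (f * X ^ (r : ℕ)) (k + m) hdeg]
          apply Finset.sum_congr rfl
          intro i _
          rw [Polynomial.coeff_mul_X_pow']
          simp only [hT, Matrix.map_apply, sylAux, Matrix.of_apply, hr, if_true]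
          rw [apply_ite C]
          simp only [smul_eq_mul, map_zero]
          ring
        rw [heq]
        exact Ideal.mul_mem_right _ _ (Ideal.subset_span (Set.mem_insert _ _))
      · have heq : (∑ i : Fin (k + m), ((X : R[X]) ^ (i : ℕ)) • T r i) = g * X ^ ((r : ℕ) - k) := by
          have hdeg : (g * X ^ ((r : ℕ) - k)).natDegree < k + m := by
            have hrlt := r.isLt
            calc (g * X ^ ((r : ℕ) - k)).natDegree ≤ k + ((r : ℕ) - k) :=
              le_trans (natDegree_mul_le) (add_le_add le_rfl (natDegree_X_pow_le _))
            _ < k + m := by omega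
          rw [← vpoly_eq (g * X ^ ((r : ℕ) - k)) (k + m) hdeg]
          apply Finset.sum_congr rfl
          intro i _
          rw [Polynomial.coeff_mul_X_pow']
          simp only [hT, Matrix.map_apply, sylAux, Matrix.of_apply, hr, if_false]
          rw [apply_ite C]
          simp only [smul_eq_mul, map_zero]
          ring
        rw [heq]
        exact Ideal.mul_mem_right _ _
          (Ideal.subset_span (Set.mem_insert_of_mem _ (Set.mem_singleton _)))
    rw [hdet, hcol, Matrix.det_apply']
    apply Ideal.sum_mem
    intro σ _
    apply Ideal.mul_mem_left
    rw [← Finset.mul_prod_erase Finset.univ _ (Finset.mem_univ (0 : Fin (k + m)))]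
    apply Ideal.mul_mem_right
    rw [Matrix.updateCol_self]
    exact hcolval (σ 0)

section FieldLemma

variable {F : Type*} [Field F]

lemma coeff_vsum {n : ℕ} (w : Fin n → F) (j : Fin n) :
    (∑ i : Fin n, C (w i) * X ^ (i : ℕ)).coeff (j : ℕ) = w j := by
  rw [finset_sum_coeff]
  simp only [coeff_C_mul, coeff_X_pow]
  have h : ∀ i : Fin n, i ∈ Finset.univ →
      (w i * if (j : ℕ) = (i : ℕ) then 1 else 0) = if j = i then w i else 0 := by
    intro i _
    by_cases h : j = i <;> simp [h, Fin.val_inj]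
  rw [Finset.sum_congr rfl h]
  simp

/-- The key computation: row combinations of the Sylvester matrix are coefficients
of `a * f + b * g`. -/
lemma vecMul_sylAux (f g : F[X]) (v : Fin (g.natDegree + f.natDegree) → F)
    (j : Fin (g.natDegree + f.natDegree)) :
    Matrix.vecMul v (sylAux f g f.natDegree g.natDegree) j =
      ((∑ i : Fin g.natDegree, C (v (Fin.castAdd f.natDegree i)) * X ^ (i : ℕ)) * f
        + (∑ i : Fin f.natDegree, C (v (Fin.natAdd g.natDegree i)) * X ^ (i : ℕ)) * g).coeff
          (j : ℕ) := by
  rw [coeff_add]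
  rw [Finset.sum_mul, Finset.sum_mul, finset_sum_coeff, finset_sum_coeff]
  rw [Matrix.vecMul, dotProduct]
  rw [Fin.sum_univ_add]
  congr 1
  · apply Finset.sum_congr rfl
    intro i _
    have hcast : ((Fin.castAdd f.natDegree i : Fin (g.natDegree + f.natDegree)) : ℕ)
      = (i : ℕ) := rfl
    rw [show C (v (Fin.castAdd f.natDegree i)) * X ^ (i : ℕ) * f
        = (C (v (Fin.castAdd f.natDegree i)) * f) * X ^ (i : ℕ) by ring]
    rw [Polynomial.coeff_mul_X_pow', coeff_C_mul]
    simp only [sylAux, Matrix.of_apply, hcast]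
    have hik : (i : ℕ) < g.natDegree := i.isLt
    rw [if_pos hik]
    rw [mul_ite, mul_zero]
  · apply Finset.sum_congr rfl
    intro i _
    have hcast : ((Fin.natAdd g.natDegree i : Fin (g.natDegree + f.natDegree)) : ℕ)
      = g.natDegree + (i : ℕ) := rfl
    rw [show C (v (Fin.natAdd g.natDegree i)) * X ^ (i : ℕ) * g
        = (C (v (Fin.natAdd g.natDegree i)) * g) * X ^ (i : ℕ) by ring]
    rw [Polynomial.coeff_mul_X_pow', coeff_C_mul]
    simp only [sylAux, Matrix.of_apply, hcast]
    rw [if_neg (by omega), show g.natDegree + (i : ℕ) - g.natDegree = (i : ℕ) by omega]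
    rw [mul_ite, mul_zero]

lemma sylAux_det_eq_zero_iff (f g : F[X]) (hf : f.Monic) (hg : g.Monic) :
    (sylAux f g f.natDegree g.natDegree).det = 0 ↔ ¬ IsCoprime f g := by
  set m := f.natDegree with hm
  set k := g.natDegree with hk
  have hf0 : f ≠ 0 := hf.ne_zero
  have hg0 : g ≠ 0 := hg.ne_zero
  rw [← Matrix.exists_vecMul_eq_zero_iff]
  constructor
  · rintro ⟨v, hv0, hv⟩
    set a : F[X] := ∑ i : Fin k, C (v (Fin.castAdd m i)) * X ^ (i : ℕ) with ha
    set b : F[X] := ∑ i : Fin m, C (v (Fin.natAdd k i)) * X ^ (i : ℕ) with hb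
    have hda : a.degree < (k : WithBot ℕ) := degree_sum_fin_lt _
    have hdb : b.degree < (m : WithBot ℕ) := degree_sum_fin_lt _
    have hab : a * f + b * g = 0 := by
      ext j
      by_cases hj : j < k + m
      · have := congrFun hv ⟨j, hj⟩
        rw [vecMul_sylAux f g v ⟨j, hj⟩] at this
        simpa using this
      · rw [coeff_zero, coeff_add]
        have h1 : (a * f).coeff j = 0 := by
          rcases eq_or_ne a 0 with h | h
          · simp [h]
          · apply coeff_eq_zero_of_natDegree_lt
            have : a.natDegree < k := (Polynomial.natDegree_lt_iff_degree_lt h).mpr hda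
            calc (a * f).natDegree ≤ a.natDegree + m := natDegree_mul_le
              _ < k + m := by omega
              _ ≤ j := by omega
        have h2 : (b * g).coeff j = 0 := by
          rcases eq_or_ne b 0 with h | h
          · simp [h]
          · apply coeff_eq_zero_of_natDegree_lt
            have : b.natDegree < m := (Polynomial.natDegree_lt_iff_degree_lt h).mpr hdb
            calc (b * g).natDegree ≤ b.natDegree + k := natDegree_mul_le
              _ < k + m := by omega
              _ ≤ j := by omega
        rw [h1, h2, add_zero]
    have hab0 : a ≠ 0 ∨ b ≠ 0 := by
      by_contra hcon
      push_neg at hcon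
      apply hv0
      funext i
      rcases lt_or_ge (i : ℕ) k with hik | hik
      · have : v (Fin.castAdd m ⟨(i : ℕ), hik⟩) = a.coeff ((⟨(i : ℕ), hik⟩ : Fin k) : ℕ) :=
          (coeff_vsum (fun t : Fin k => v (Fin.castAdd m t)) ⟨(i : ℕ), hik⟩).symm
        rw [show i = Fin.castAdd m ⟨(i : ℕ), hik⟩ from Fin.ext rfl]
        rw [this, hcon.1, coeff_zero, Pi.zero_apply]
      · have hik2 : (i : ℕ) - k < m := by have := i.isLt; omega
        have heq : i = Fin.natAdd k ⟨(i : ℕ) - k, hik2⟩ := Fin.ext (by simp; omega)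
        have : v (Fin.natAdd k ⟨(i : ℕ) - k, hik2⟩)
            = b.coeff ((⟨(i : ℕ) - k, hik2⟩ : Fin m) : ℕ) :=
          (coeff_vsum (fun t : Fin m => v (Fin.natAdd k t)) ⟨(i : ℕ) - k, hik2⟩).symm
        rw [heq, this, hcon.2, coeff_zero, Pi.zero_apply]
    intro hcop
    have hfb : f ∣ b := by
      apply hcop.dvd_of_dvd_mul_right
      exact ⟨-a, by linear_combination hab⟩
    rcases eq_or_ne b 0 with hb0 | hb0
    · have : a * f = 0 := by rw [hb0] at hab; simpa using hab
      have ha0 : a = 0 := by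
        rcases mul_eq_zero.mp this with h | h
        · exact h
        · exact absurd h hf0
      rcases hab0 with h | h
      · exact h ha0
      · exact h hb0
    · have h1 : f.degree ≤ b.degree := degree_le_of_dvd hfb hb0
      have h2 : f.degree = (m : WithBot ℕ) := degree_eq_natDegree hf0
      exact absurd (lt_of_le_of_lt (h2 ▸ h1) hdb) (lt_irrefl _)
  · intro hncop
    classical
    have hd : ¬ IsUnit (EuclideanDomain.gcd f g) :=
      fun h => hncop (EuclideanDomain.gcd_isUnit_iff.mp h)
    set d := EuclideanDomain.gcd f g with hdd
    have hdf : d ∣ f := EuclideanDomain.gcd_dvd_left f g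
    have hdg : d ∣ g := EuclideanDomain.gcd_dvd_right f g
    obtain ⟨f', hf'⟩ := hdf
    obtain ⟨g', hg'⟩ := hdg
    have hd0 : d ≠ 0 := fun h => hf0 (by rw [hf', h, zero_mul])
    have hf'0 : f' ≠ 0 := fun h => hf0 (by rw [hf', h, mul_zero])
    have hg'0 : g' ≠ 0 := fun h => hg0 (by rw [hg', h, mul_zero])
    have hd1 : 1 ≤ d.natDegree := by
      by_contra hcon
      push_neg at hcon
      have : d.natDegree = 0 := by omega
      exact hd (Polynomial.isUnit_iff_degree_eq_zero.mpr
        (by rw [degree_eq_natDegree hd0, this]; rfl))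
    have hmf : m = d.natDegree + f'.natDegree := by
      rw [hm, hf']; exact natDegree_mul hd0 hf'0
    have hkg : k = d.natDegree + g'.natDegree := by
      rw [hk, hg']; exact natDegree_mul hd0 hg'0
    have hdg' : g'.natDegree < k := by omega
    have hdf' : f'.natDegree < m := by omega
    set a : F[X] := g' with haa
    set b : F[X] := -f' with hbb
    have hab : a * f + b * g = 0 := by rw [haa, hbb, hf', hg']; ring
    have hdb' : b.natDegree < m := by rw [hbb, natDegree_neg]; exact hdf'
    set v : Fin (k + m) → F := fun i =>
      if h : (i : ℕ) < k then a.coeff (i : ℕ) else b.coeff ((i : ℕ) - k) with hvv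
    refine ⟨v, ?_, ?_⟩
    · intro hcon
      have h1 : a.coeff a.natDegree ≠ 0 := by
        simpa using leadingCoeff_ne_zero.mpr hg'0
      have h2 : v ⟨a.natDegree, by omega⟩ = a.coeff a.natDegree := by
        simp only [hvv]
        exact dif_pos (by exact hdg')
      rw [hcon] at h2
      exact h1 (by simpa using h2.symm)
    · funext j
      rw [vecMul_sylAux f g v j]
      have hva : (∑ i : Fin k, C (v (Fin.castAdd m i)) * X ^ (i : ℕ)) = a := by
        have : ∀ i : Fin k, v (Fin.castAdd m i) = a.coeff (i : ℕ) := by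
          intro i
          simp only [hvv]
          exact dif_pos i.isLt
        rw [Finset.sum_congr rfl (fun i _ => by rw [this i])]
        exact vpoly_eq a k hdg'
      have hvb : (∑ i : Fin m, C (v (Fin.natAdd k i)) * X ^ (i : ℕ)) = b := by
        have : ∀ i : Fin m, v (Fin.natAdd k i) = b.coeff (i : ℕ) := by
          intro i
          simp only [hvv]
          have h1 : ¬ ((Fin.natAdd k i : Fin (k + m)) : ℕ) < k := by
            simp
          rw [dif_neg h1]
          congr 1
          simp
        rw [Finset.sum_congr rfl (fun i _ => by rw [this i])]
        exact vpoly_eq b m hdb'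
      rw [hva, hvb, hab]
      simp

end FieldLemma

/-- For monic `f, g ∈ ℤ[x]` and a prime `p`, `p` divides the resultant of
`f` and `g` if and only if `p` divides the reduced resultant of `f` and `g`. -/
theorem prime_dvd_resultant_iff_dvd_reducedResultant (f g : Polynomial ℤ)
    (hf : f.Monic) (hg : g.Monic) (p : ℕ) (hp : p.Prime) (n : ℕ)
    (hn : Ideal.comap (Int.castRingHom (Polynomial ℤ)) (Ideal.span {f, g})
        = Ideal.span {(n : ℤ)}) :
    (p : ℤ) ∣ sylvesterResultant f g ↔ p ∣ n := by
  classical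
  haveI : Fact p.Prime := ⟨hp⟩
  set φ := Int.castRingHom (ZMod p) with hφ
  set fb := f.map φ with hfbd
  set gb := g.map φ with hgbd
  have hfb : fb.Monic := hf.map φ
  have hgb : gb.Monic := hg.map φ
  have hdf : fb.natDegree = f.natDegree := hf.natDegree_map φ
  have hdg : gb.natDegree = g.natDegree := hg.natDegree_map φ
  have hnmem : ((n : ℤ) : ℤ[X]) ∈ Ideal.span ({f, g} : Set ℤ[X]) := by
    have h1 : (n : ℤ) ∈ Ideal.span {(n : ℤ)} := Ideal.mem_span_singleton_self _
    rw [← hn, Ideal.mem_comap] at h1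
    simpa [Int.coe_castRingHom] using h1
  have hdetmem : ((sylvesterResultant f g : ℤ) : ℤ[X]) ∈ Ideal.span ({f, g} : Set ℤ[X]) := by
    rw [← Polynomial.C_eq_intCast, sylvesterResultant_eq]
    exact sylAux_det_mem f g hf
  have hdvd : (n : ℤ) ∣ sylvesterResultant f g := by
    rw [← Ideal.mem_span_singleton, ← hn, Ideal.mem_comap]
    simpa [Int.coe_castRingHom] using hdetmem
  have hmod : ((p : ℤ) ∣ sylvesterResultant f g) ↔ ¬ IsCoprime fb gb := by
    rw [← ZMod.intCast_zmod_eq_zero_iff_dvd, sylvesterResultant_eq]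
    have hcast : (((sylAux f g f.natDegree g.natDegree).det : ℤ) : ZMod p)
        = (sylAux fb gb fb.natDegree gb.natDegree).det := by
      have h1 : (((sylAux f g f.natDegree g.natDegree).det : ℤ) : ZMod p)
          = ((sylAux f g f.natDegree g.natDegree).map φ).det := by
        have h0 := RingHom.map_det φ (sylAux f g f.natDegree g.natDegree)
        rw [RingHom.mapMatrix_apply] at h0
        exact h0
      rw [h1, sylAux_map, hdf, hdg]
    rw [hcast, sylAux_det_eq_zero_iff fb gb hfb hgb]
  constructor
  · intro hdet
    have hncop := hmod.mp hdet
    obtain ⟨u, w, huw⟩ := Ideal.mem_span_pair.mp hnmem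
    have hC : (u.map φ) * fb + (w.map φ) * gb = C ((n : ZMod p)) := by
      have h2 := congrArg (Polynomial.map φ) huw
      rw [Polynomial.map_add, Polynomial.map_mul, Polynomial.map_mul] at h2
      rw [h2]
      push_cast
      simp [Polynomial.C_eq_natCast]
    have hdvdn : EuclideanDomain.gcd fb gb ∣ C ((n : ZMod p)) := by
      rw [← hC]
      exact dvd_add ((EuclideanDomain.gcd_dvd_left fb gb).mul_left _)
        ((EuclideanDomain.gcd_dvd_right fb gb).mul_left _)
    by_contra hpn
    have hn0 : ((n : ZMod p)) ≠ 0 := by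
      rwa [Ne, ZMod.natCast_eq_zero_iff]
    have hunit : IsUnit (EuclideanDomain.gcd fb gb) :=
      isUnit_of_dvd_unit hdvdn (Polynomial.isUnit_C.mpr hn0.isUnit)
    exact hncop (EuclideanDomain.gcd_isUnit_iff.mp hunit)
  · intro hpn
    exact dvd_trans (Int.natCast_dvd_natCast.mpr hpn) hdvd
end

section
/- Let f₁ and f₂ be coprime polynomials in ℤ[x], not both constant, whose leading coefficients are coprime, and let n be their reduced resultant. Then there exist unique polynomials b₁, b₂ ∈ ℤ[x] with deg b₁ < deg f₂, deg b₂ < deg f₁, and n = b₁f₁ + b₂f₂. -/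
open Polynomial

private lemma reduce_aux (f₁ f₂ : Polynomial ℤ) (hf₁ : f₁ ≠ 0) (hf₂ : f₂ ≠ 0)
    (hdeg : 0 < f₁.natDegree ∨ 0 < f₂.natDegree)
    (hlead : IsCoprime f₁.leadingCoeff f₂.leadingCoeff) (n : ℤ) :
    ∀ N (a₁ a₂ : Polynomial ℤ), a₁.natDegree ≤ N → a₁ * f₁ + a₂ * f₂ = C n →
      ∃ b₁ b₂ : Polynomial ℤ, b₁.degree < f₂.degree ∧ b₁ * f₁ + b₂ * f₂ = C n := by
  intro N
  induction N using Nat.strong_induction_on with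
  | _ N ih =>
    intro a₁ a₂ hN heq
    by_cases hlt : a₁.degree < f₂.degree
    · exact ⟨a₁, a₂, hlt, heq⟩
    push_neg at hlt
    have ha₁ : a₁ ≠ 0 := by
      rintro rfl
      simp only [degree_zero, le_bot_iff, degree_eq_bot] at hlt
      exact hf₂ hlt
    set d : ℕ := a₁.natDegree + f₁.natDegree with hd
    have hdf : f₂.natDegree ≤ a₁.natDegree := natDegree_le_natDegree hlt
    have hd0 : 0 < d := by rcases hdeg with h | h <;> omega
    have hdegmul : (a₁ * f₁).degree = (d : ℕ) := by
      rw [degree_mul, degree_eq_natDegree ha₁, degree_eq_natDegree hf₁]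
      exact_mod_cast rfl
    have heq2 : a₂ * f₂ = C n - a₁ * f₁ := by linear_combination heq
    have hCn : (C n).degree < (a₁ * f₁).degree := by
      rw [hdegmul]
      exact lt_of_le_of_lt degree_C_le (by exact_mod_cast hd0)
    have hdeg22 : (a₂ * f₂).degree = (d : ℕ) := by
      rw [heq2, degree_sub_eq_right_of_degree_lt hCn, hdegmul]
    have hnd22 : (a₂ * f₂).natDegree = d := natDegree_eq_of_degree_eq_some hdeg22
    have hcoeff : a₁.leadingCoeff * f₁.leadingCoeff + a₂.leadingCoeff * f₂.leadingCoeff = 0 := by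
      have h1 := congrArg (fun p => p.coeff d) heq
      simp only [coeff_add] at h1
      rw [coeff_C, if_neg hd0.ne'] at h1
      rw [hd, coeff_mul_degree_add_degree] at h1
      have h2 : (a₂ * f₂).coeff d = a₂.leadingCoeff * f₂.leadingCoeff := by
        rw [← leadingCoeff_mul, leadingCoeff, hnd22]
      rw [h2] at h1
      exact h1
    have hdvd : f₂.leadingCoeff ∣ a₁.leadingCoeff := by
      refine hlead.symm.dvd_of_dvd_mul_right ⟨-a₂.leadingCoeff, ?_⟩
      linarith [hcoeff]
    obtain ⟨c, hc⟩ := hdvd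
    have hc0 : c ≠ 0 := by
      rintro rfl
      simp only [mul_zero] at hc
      exact ha₁ (leadingCoeff_eq_zero.mp hc)
    set t : Polynomial ℤ := C c * X ^ (a₁.natDegree - f₂.natDegree) with ht
    have hdt : (t * f₂).degree = a₁.degree := by
      rw [degree_mul, degree_C_mul_X_pow _ hc0, degree_eq_natDegree hf₂,
        degree_eq_natDegree ha₁]
      rw [← Nat.cast_add, Nat.sub_add_cancel hdf]
    have hlt2 : (t * f₂).leadingCoeff = a₁.leadingCoeff := by
      rw [leadingCoeff_mul, ht, C_mul_X_pow_eq_monomial, leadingCoeff_monomial, hc, mul_comm]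
    have hdlt : (a₁ - t * f₂).degree < a₁.degree :=
      degree_sub_lt hdt.symm ha₁ hlt2.symm
    have heq' : (a₁ - t * f₂) * f₁ + (a₂ + t * f₁) * f₂ = C n := by linear_combination heq
    by_cases h0 : a₁ - t * f₂ = 0
    · refine ⟨a₁ - t * f₂, a₂ + t * f₁, ?_, heq'⟩
      rw [h0, degree_zero]
      exact Ne.bot_lt (fun h => hf₂ (degree_eq_bot.mp h))
    · have hnd : (a₁ - t * f₂).natDegree < a₁.natDegree := natDegree_lt_natDegree h0 hdlt
      exact ih (a₁ - t * f₂).natDegree (by omega) _ _ le_rfl heq'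

/-- If `f₁, f₂ ∈ ℤ[x]` are coprime (over ℚ), not both constant, with coprime
leading coefficients, and `n` is their reduced resultant, then there exist unique
`b₁, b₂ ∈ ℤ[x]` with `deg b₁ < deg f₂`, `deg b₂ < deg f₁` and `n = b₁ f₁ + b₂ f₂`. -/
theorem reducedResultant_bezout_existsUnique (f₁ f₂ : Polynomial ℤ)
    (hcop : IsCoprime (f₁.map (Int.castRingHom ℚ)) (f₂.map (Int.castRingHom ℚ)))
    (hdeg : 0 < f₁.natDegree ∨ 0 < f₂.natDegree)
    (hlead : IsCoprime f₁.leadingCoeff f₂.leadingCoeff)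
    (n : ℕ)
    (hn : Ideal.comap (Int.castRingHom (Polynomial ℤ)) (Ideal.span {f₁, f₂})
        = Ideal.span {(n : ℤ)}) :
    ∃! b : Polynomial ℤ × Polynomial ℤ,
      b.1.degree < f₂.degree ∧ b.2.degree < f₁.degree ∧
        (C (n : ℤ)) = b.1 * f₁ + b.2 * f₂ := by
  have hinj : Function.Injective (Int.castRingHom ℚ) := Int.cast_injective
  have hf₁ : f₁ ≠ 0 := by
    rintro rfl
    simp only [Polynomial.map_zero, isCoprime_zero_left] at hcop
    have h2 : f₂.natDegree = 0 := by
      have := natDegree_eq_zero_of_isUnit hcop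
      rwa [natDegree_map_eq_of_injective hinj] at this
    simp [h2] at hdeg
  have hf₂ : f₂ ≠ 0 := by
    rintro rfl
    simp only [Polynomial.map_zero, isCoprime_zero_right] at hcop
    have h2 : f₁.natDegree = 0 := by
      have := natDegree_eq_zero_of_isUnit hcop
      rwa [natDegree_map_eq_of_injective hinj] at this
    simp [h2] at hdeg
  -- C n is in the span
  have hmem : (C (n : ℤ) : Polynomial ℤ) ∈ Ideal.span ({f₁, f₂} : Set (Polynomial ℤ)) := by
    have h1 : (n : ℤ) ∈ Ideal.span {(n : ℤ)} := Ideal.mem_span_singleton_self _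
    rw [← hn, Ideal.mem_comap] at h1
    have : (Int.castRingHom (Polynomial ℤ)) (n : ℤ) = C (n : ℤ) := by
      simp [C_eq_intCast]
    rwa [this] at h1
  rw [Ideal.mem_span_pair] at hmem
  obtain ⟨a₁, a₂, heq⟩ := hmem
  obtain ⟨b₁, b₂, hb₁, hbeq⟩ :=
    reduce_aux f₁ f₂ hf₁ hf₂ hdeg hlead (n : ℤ) a₁.natDegree a₁ a₂ le_rfl heq
  have hb₂ : b₂.degree < f₁.degree := by
    by_cases h0 : b₂ = 0
    · rw [h0, degree_zero]
      exact Ne.bot_lt (fun h => hf₁ (degree_eq_bot.mp h))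
    have hsum : f₁.degree + f₂.degree = ((f₁.natDegree + f₂.natDegree : ℕ) : WithBot ℕ) := by
      rw [degree_eq_natDegree hf₁, degree_eq_natDegree hf₂]; exact_mod_cast rfl
    have hpos : (0 : WithBot ℕ) < f₁.degree + f₂.degree := by
      rw [hsum]
      exact_mod_cast (by omega : 0 < f₁.natDegree + f₂.natDegree)
    have hkey : b₂.degree + f₂.degree < f₁.degree + f₂.degree := by
      have h1 : b₂ * f₂ = C (n : ℤ) - b₁ * f₁ := by linear_combination hbeq
      have h2 : (b₂ * f₂).degree ≤ max (C (n : ℤ)).degree (b₁ * f₁).degree := by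
        rw [h1]; exact degree_sub_le _ _
      have hC : (C (n : ℤ)).degree < f₁.degree + f₂.degree :=
        lt_of_le_of_lt degree_C_le hpos
      have hb1f1 : (b₁ * f₁).degree < f₁.degree + f₂.degree := by
        rw [degree_mul, add_comm f₁.degree f₂.degree]
        rcases eq_or_ne b₁ 0 with rfl | hb0
        · rw [degree_zero, WithBot.bot_add, add_comm f₂.degree f₁.degree]
          exact lt_of_le_of_lt bot_le hpos
        · exact WithBot.add_lt_add_right (fun h => hf₁ (degree_eq_bot.mp h)) hb₁
      calc b₂.degree + f₂.degree = (b₂ * f₂).degree := (degree_mul).symm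
        _ ≤ max (C (n : ℤ)).degree (b₁ * f₁).degree := h2
        _ < f₁.degree + f₂.degree := max_lt hC hb1f1
    exact lt_of_add_lt_add_right hkey
  refine ⟨(b₁, b₂), ⟨hb₁, hb₂, by linear_combination -hbeq⟩, ?_⟩
  rintro ⟨c₁, c₂⟩ ⟨hc₁, hc₂, hceq⟩
  have key : (c₁ - b₁) * f₁ = (b₂ - c₂) * f₂ := by linear_combination -hceq - hbeq
  have hc₁b₁ : c₁ = b₁ := by
    by_contra hne
    have hne' : c₁ - b₁ ≠ 0 := sub_ne_zero.mpr hne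
    have hdvd : (f₂.map (Int.castRingHom ℚ)) ∣ ((c₁ - b₁).map (Int.castRingHom ℚ)) := by
      refine hcop.symm.dvd_of_dvd_mul_right ⟨(b₂ - c₂).map (Int.castRingHom ℚ), ?_⟩
      rw [← Polynomial.map_mul, ← Polynomial.map_mul, key, mul_comm]
    have hmapne : (c₁ - b₁).map (Int.castRingHom ℚ) ≠ 0 := by
      rwa [Ne, Polynomial.map_eq_zero_iff hinj]
    have hle := degree_le_of_dvd hdvd hmapne
    rw [degree_map_eq_of_injective hinj, degree_map_eq_of_injective hinj] at hle
    have hlt : (c₁ - b₁).degree < f₂.degree :=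
      lt_of_le_of_lt (degree_sub_le _ _) (max_lt hc₁ hb₁)
    exact absurd hle (not_le.mpr hlt)
  have hc₂b₂ : c₂ = b₂ := by
    have : (b₂ - c₂) * f₂ = 0 := by rw [← key, hc₁b₁, sub_self, zero_mul]
    rcases mul_eq_zero.mp this with h | h
    · exact (sub_eq_zero.mp h).symm
    · exact absurd h hf₂
  simp [hc₁b₁, hc₂b₂, Prod.ext_iff]
end

section
/- Let f₁ and f₂ be coprime polynomials in ℤ[x], not both constant, with coprime leading coefficients, and let a₁, a₂ be the unique polynomials in ℚ[x] with deg a₁ < deg f₂, deg a₂ < deg f₁, and 1 = a₁f₁ + a₂f₂. Then the reduced resultant of f₁ and f₂ equals the least common multiple of the denominators of the coefficients of a₁ and a₂. -/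
open Polynomial

/-- Pseudo-division for integer polynomials. -/
lemma pseudo_div (g : Polynomial ℤ) (hg : g ≠ 0) (f : Polynomial ℤ) :
    ∃ (k : ℕ) (q r : Polynomial ℤ),
      C (g.leadingCoeff ^ k) * f = q * g + r ∧ r.degree < g.degree := by
  suffices H : ∀ (N : ℕ) (f : Polynomial ℤ), f.natDegree ≤ N →
      ∃ (k : ℕ) (q r : Polynomial ℤ),
        C (g.leadingCoeff ^ k) * f = q * g + r ∧ r.degree < g.degree from H _ f le_rfl
  intro N
  induction N using Nat.strong_induction_on with
  | _ N ih =>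
  intro f hN
  by_cases h : f.degree < g.degree
  · exact ⟨0, 0, f, by simp, h⟩
  · push_neg at h
    have hf : f ≠ 0 := by
      intro h0
      rw [h0, degree_zero, le_bot_iff, degree_eq_bot] at h
      exact hg h
    have hlcg : g.leadingCoeff ≠ 0 := leadingCoeff_ne_zero.2 hg
    have hlcf : f.leadingCoeff ≠ 0 := leadingCoeff_ne_zero.2 hf
    set e := f.natDegree - g.natDegree with he
    set f' := C g.leadingCoeff * f - C f.leadingCoeff * X ^ e * g with hf'
    have hdegle : g.natDegree ≤ f.natDegree := natDegree_le_natDegree h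
    have hd1 : (C g.leadingCoeff * f).degree = f.degree := degree_C_mul hlcg
    have hd2 : (C f.leadingCoeff * X ^ e * g).degree = f.degree := by
      rw [mul_assoc, degree_C_mul hlcf, degree_mul, degree_X_pow,
        degree_eq_natDegree hg, degree_eq_natDegree hf, ← Nat.cast_add,
        Nat.sub_add_cancel hdegle]
    have hdf' : f'.degree < f.degree := by
      rw [hf']
      calc (C g.leadingCoeff * f - C f.leadingCoeff * X ^ e * g).degree
          < (C g.leadingCoeff * f).degree := by
            apply degree_sub_lt (hd1.trans hd2.symm)
              (mul_ne_zero (C_ne_zero.2 hlcg) hf)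
            rw [leadingCoeff_mul, leadingCoeff_mul, leadingCoeff_mul, leadingCoeff_C,
              leadingCoeff_C, leadingCoeff_X_pow]; ring
        _ = f.degree := hd1
    by_cases h2 : f'.degree < g.degree
    · refine ⟨1, C f.leadingCoeff * X ^ e, f', ?_, h2⟩
      rw [pow_one, hf']; ring
    · push_neg at h2
      have hf'0 : f' ≠ 0 := by
        intro h0
        rw [h0, degree_zero, le_bot_iff, degree_eq_bot] at h2
        exact hg h2
      obtain ⟨k, q, r, hqr, hr⟩ := ih f'.natDegree
        (lt_of_lt_of_le (natDegree_lt_natDegree hf'0 hdf') hN) f' le_rfl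
      refine ⟨k + 1, q + C (g.leadingCoeff ^ k * f.leadingCoeff) * X ^ e, r, ?_, hr⟩
      rw [pow_succ, C_mul, C_mul]
      linear_combination hqr + C (g.leadingCoeff ^ k) * hf'

private lemma degC_mul_le (a : ℚ) (p : Polynomial ℚ) : (C a * p).degree ≤ p.degree :=
  calc (C a * p).degree ≤ (C a).degree + p.degree := degree_mul_le _ _
    _ ≤ 0 + p.degree := add_le_add_left degree_C_le _
    _ = p.degree := zero_add _

private lemma key_deg {F R S Q : Polynomial ℚ} (_hF : F ≠ 0) (hS : S.degree < F.degree)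
    (hR : R.degree < F.degree) (h : S = R + Q * F) : S = R ∧ Q = 0 := by
  by_cases hQ : Q = 0
  · rw [hQ, zero_mul, add_zero] at h; exact ⟨h, hQ⟩
  · exfalso
    have h1 : (S - R).degree < F.degree := lt_of_le_of_lt (degree_sub_le _ _) (max_lt hS hR)
    have h2 : S - R = Q * F := by rw [h]; ring
    rw [h2, degree_mul] at h1
    have h3 : F.degree ≤ Q.degree + F.degree := by
      have : (0 : WithBot ℕ) ≤ Q.degree := zero_le_degree_iff.2 hQ
      calc F.degree = 0 + F.degree := (zero_add _).symm
        _ ≤ Q.degree + F.degree := add_le_add_left this _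
    exact absurd (lt_of_le_of_lt h3 h1) (lt_irrefl _)

private lemma int_mul_of_den_dvd (q : ℚ) (m : ℕ) (h : q.den ∣ m) :
    ∃ z : ℤ, (z : ℚ) = (m : ℚ) * q := by
  obtain ⟨t, ht⟩ := h
  refine ⟨q.num * t, ?_⟩
  rw [ht]
  have hd : (q.den : ℚ) ≠ 0 := by exact_mod_cast q.den_nz
  have hdq : (q.den : ℚ) * q = q.num := by
    rw [mul_comm, ← eq_div_iff hd]; exact (Rat.num_div_den q).symm
  push_cast
  linear_combination (-(t : ℚ)) * hdq

private lemma den_dvd_of_int_mul (q : ℚ) (m : ℕ) (hm : m ≠ 0) (z : ℤ)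
    (h : (m : ℚ) * q = z) : q.den ∣ m := by
  have hm' : ((m : ℤ) : ℚ) ≠ 0 := by exact_mod_cast hm
  have h2 := Rat.den_dvd z (m : ℤ)
  rw [Rat.divInt_eq_div] at h2
  have hq : (z : ℚ) / ((m : ℤ) : ℚ) = q := by
    rw [div_eq_iff hm']
    push_cast
    linear_combination -h
  rw [hq] at h2
  exact_mod_cast h2

private lemma coprime_combine (a b : ℤ) (hab : IsCoprime a b) (x : ℚ)
    (ha : ∃ z : ℤ, (z : ℚ) = (a : ℚ) * x) (hb : ∃ z : ℤ, (z : ℚ) = (b : ℚ) * x) :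
    ∃ z : ℤ, (z : ℚ) = x := by
  obtain ⟨u, v, huv⟩ := hab
  obtain ⟨za, hza⟩ := ha
  obtain ⟨zb, hzb⟩ := hb
  have hc : (u : ℚ) * a + (v : ℚ) * b = 1 := by exact_mod_cast huv
  exact ⟨u * za + v * zb, by push_cast; linear_combination (u : ℚ) * hza + (v : ℚ) * hzb + x * hc⟩

/-- With `f₁, f₂ ∈ ℤ[x]` coprime, not both constant, with coprime leading
coefficients, and `a₁, a₂ ∈ ℚ[x]` the unique polynomials with `deg a₁ < deg f₂`,
`deg a₂ < deg f₁` and `1 = a₁ f₁ + a₂ f₂`, the reduced resultant of `f₁` and `f₂` equals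
the lcm of the denominators of the coefficients of `a₁` and `a₂`. -/
theorem reducedResultant_eq_lcm_denominators (f₁ f₂ : Polynomial ℤ)
    (hcop : IsCoprime (f₁.map (Int.castRingHom ℚ)) (f₂.map (Int.castRingHom ℚ)))
    (hdeg : 0 < f₁.natDegree ∨ 0 < f₂.natDegree)
    (hlead : IsCoprime f₁.leadingCoeff f₂.leadingCoeff)
    (a₁ a₂ : Polynomial ℚ)
    (ha₁ : a₁.degree < (f₂.map (Int.castRingHom ℚ)).degree)
    (ha₂ : a₂.degree < (f₁.map (Int.castRingHom ℚ)).degree)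
    (hbez : 1 = a₁ * f₁.map (Int.castRingHom ℚ) + a₂ * f₂.map (Int.castRingHom ℚ))
    (n : ℕ)
    (hn : Ideal.comap (Int.castRingHom (Polynomial ℤ)) (Ideal.span {f₁, f₂})
        = Ideal.span {(n : ℤ)}) :
    n = Nat.lcm (a₁.support.lcm fun i => (a₁.coeff i).den)
      (a₂.support.lcm fun i => (a₂.coeff i).den) := by
  set φ := Int.castRingHom ℚ with hφ
  have hinj : Function.Injective ⇑φ := Int.cast_injective
  set F₁ := f₁.map φ with hF₁
  set F₂ := f₂.map φ with hF₂
  -- nonvanishing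
  have hf₁0 : f₁ ≠ 0 := by
    rintro rfl
    rw [hF₁, Polynomial.map_zero] at hcop
    have := Polynomial.natDegree_eq_zero_of_isUnit (isCoprime_zero_left.mp hcop)
    rw [natDegree_map_eq_of_injective hinj] at this
    simp only [natDegree_zero] at hdeg
    omega
  have hf₂0 : f₂ ≠ 0 := by
    rintro rfl
    rw [hF₂, Polynomial.map_zero] at hcop
    have := Polynomial.natDegree_eq_zero_of_isUnit (isCoprime_zero_right.mp hcop)
    rw [natDegree_map_eq_of_injective hinj] at this
    simp only [natDegree_zero] at hdeg
    omega
  have hF₁0 : F₁ ≠ 0 := fun h => hf₁0 (Polynomial.map_injective φ hinj (by simpa using h))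
  have hF₂0 : F₂ ≠ 0 := fun h => hf₂0 (Polynomial.map_injective φ hinj (by simpa using h))
  set d₁ := a₁.support.lcm fun i => (a₁.coeff i).den with hd₁
  set d₂ := a₂.support.lcm fun i => (a₂.coeff i).den with hd₂
  set d := Nat.lcm d₁ d₂ with hd
  -- clearing denominators
  have hlift : ∀ (p : Polynomial ℚ) (dp : ℕ), (∀ i ∈ p.support, (p.coeff i).den ∣ dp) →
      ∃ P : Polynomial ℤ, P.map φ = C (dp : ℚ) * p := by
    intro p dp hdvd
    have : (C (dp : ℚ) * p) ∈ lifts φ := by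
      rw [lifts_iff_coeff_lifts]
      intro i
      rw [coeff_C_mul]
      by_cases hi : i ∈ p.support
      · obtain ⟨z, hz⟩ := int_mul_of_den_dvd _ _ (hdvd i hi)
        exact ⟨z, hz⟩
      · rw [notMem_support_iff.1 hi, mul_zero]
        exact ⟨0, by simp⟩
    exact (mem_lifts _).1 this
  obtain ⟨A₁, hA₁⟩ := hlift a₁ d (fun i hi => by
    refine dvd_trans ?_ (Nat.dvd_lcm_left d₁ d₂)
    exact Finset.dvd_lcm hi)
  obtain ⟨A₂, hA₂⟩ := hlift a₂ d (fun i hi => by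
    refine dvd_trans ?_ (Nat.dvd_lcm_right d₁ d₂)
    exact Finset.dvd_lcm hi)
  -- Part 1 : n ∣ d
  have heqmap : (A₁ * f₁ + A₂ * f₂).map φ = (C (d : ℤ)).map φ := by
    rw [Polynomial.map_add, Polynomial.map_mul, Polynomial.map_mul, hA₁, hA₂, map_C]
    have : (φ (d : ℤ)) = ((d : ℕ) : ℚ) := by push_cast [hφ]; simp
    rw [this]
    linear_combination -C ((d : ℕ) : ℚ) * hbez
  have heq : A₁ * f₁ + A₂ * f₂ = C (d : ℤ) := Polynomial.map_injective φ hinj heqmap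
  have hdmem : (d : ℤ) ∈ Ideal.comap (Int.castRingHom (Polynomial ℤ)) (Ideal.span {f₁, f₂}) := by
    rw [Ideal.mem_comap]
    have hcd : (Int.castRingHom (Polynomial ℤ)) (d : ℤ) = C (d : ℤ) := by
      simp [C_eq_intCast]
    rw [hcd, ← heq]
    exact Ideal.mem_span_pair.2 ⟨A₁, A₂, rfl⟩
  rw [hn, Ideal.mem_span_singleton] at hdmem
  have hnd : n ∣ d := by exact_mod_cast hdmem
  -- d ≠ 0, n ≠ 0
  have hden1 : d₁ ≠ 0 := by
    rw [hd₁]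
    intro h
    rw [Finset.lcm_eq_zero_iff] at h
    obtain ⟨i, _, hi⟩ := h
    exact (a₁.coeff i).den_nz hi
  have hden2 : d₂ ≠ 0 := by
    rw [hd₂]
    intro h
    rw [Finset.lcm_eq_zero_iff] at h
    obtain ⟨i, _, hi⟩ := h
    exact (a₂.coeff i).den_nz hi
  have hd0 : d ≠ 0 := Nat.lcm_ne_zero hden1 hden2
  have hn0 : n ≠ 0 := by
    rintro rfl
    exact hd0 (Nat.eq_zero_of_zero_dvd hnd)
  -- Part 2 : d ∣ n
  have hnmem : (n : ℤ) ∈ Ideal.comap (Int.castRingHom (Polynomial ℤ)) (Ideal.span {f₁, f₂}) := by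
    rw [hn]
    exact Ideal.mem_span_singleton.2 dvd_rfl
  rw [Ideal.mem_comap] at hnmem
  obtain ⟨b₁, b₂, hbb⟩ := Ideal.mem_span_pair.1 hnmem
  have hbb' : b₁ * f₁ + b₂ * f₂ = C ((n : ℕ) : ℤ) := by
    rw [hbb]; simp [C_eq_intCast]
  set B₁ := b₁.map φ with hB₁
  set B₂ := b₂.map φ with hB₂
  have hQ : B₁ * F₁ + B₂ * F₂ = C ((n : ℕ) : ℚ) := by
    have := congrArg (Polynomial.map φ) hbb'
    rw [Polynomial.map_add, Polynomial.map_mul, Polynomial.map_mul, map_C] at this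
    rw [this]
    norm_num
  have hsub : (B₁ - C ((n : ℕ) : ℚ) * a₁) * F₁ = (C ((n : ℕ) : ℚ) * a₂ - B₂) * F₂ := by
    linear_combination hQ + C ((n : ℕ) : ℚ) * hbez
  have hdvdF₂ : F₂ ∣ (B₁ - C ((n : ℕ) : ℚ) * a₁) :=
    (hcop.symm).dvd_of_dvd_mul_right ⟨C ((n : ℕ) : ℚ) * a₂ - B₂, by linear_combination hsub⟩
  obtain ⟨c, hc⟩ := hdvdF₂
  have hca₂ : C ((n : ℕ) : ℚ) * a₂ - B₂ = c * F₁ := by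
    apply mul_right_cancel₀ hF₂0
    linear_combination F₁ * hc - hsub
  -- pseudo-divisions
  obtain ⟨k, q, r, hqr, hr⟩ := pseudo_div f₂ hf₂0 b₁
  obtain ⟨m, q', r', hqr', hr'⟩ := pseudo_div f₁ hf₁0 b₂
  set γ₂ : ℚ := (f₂.leadingCoeff : ℚ) ^ k with hγ₂
  set γ₁ : ℚ := (f₁.leadingCoeff : ℚ) ^ m with hγ₁
  have hmapC₂ : (C (f₂.leadingCoeff ^ k)).map φ = C γ₂ := by
    rw [map_C]; push_cast [hφ]; simp [hγ₂]
  have hmapC₁ : (C (f₁.leadingCoeff ^ m)).map φ = C γ₁ := by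
    rw [map_C]; push_cast [hφ]; simp [hγ₁]
  have E1 : C γ₂ * B₁ = q.map φ * F₂ + r.map φ := by
    have := congrArg (Polynomial.map φ) hqr
    rw [Polynomial.map_add, Polynomial.map_mul, Polynomial.map_mul, hmapC₂] at this
    exact this
  have E2 : C γ₁ * B₂ = q'.map φ * F₁ + r'.map φ := by
    have := congrArg (Polynomial.map φ) hqr'
    rw [Polynomial.map_add, Polynomial.map_mul, Polynomial.map_mul, hmapC₁] at this
    exact this
  have hdegF₂ : F₂.degree = f₂.degree := degree_map_eq_of_injective hinj f₂
  have hdegF₁ : F₁.degree = f₁.degree := degree_map_eq_of_injective hinj f₁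
  have hrd : (r.map φ).degree < F₂.degree := lt_of_le_of_lt degree_map_le (hdegF₂ ▸ hr)
  have hrd' : (r'.map φ).degree < F₁.degree := lt_of_le_of_lt degree_map_le (hdegF₁ ▸ hr')
  -- first key application
  have hk1 : C γ₂ * (C ((n : ℕ) : ℚ) * a₁) = r.map φ ∧ q.map φ - C γ₂ * c = 0 := by
    apply key_deg hF₂0 _ hrd
    · linear_combination E1 - C γ₂ * hc
    · exact lt_of_le_of_lt (le_trans (degC_mul_le _ _) (degC_mul_le _ _)) ha₁
  have hk2 : C γ₁ * (C ((n : ℕ) : ℚ) * a₂) = r'.map φ ∧ q'.map φ + C γ₁ * c = 0 := by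
    apply key_deg hF₁0 _ hrd'
    · linear_combination E2 + C γ₁ * hca₂
    · exact lt_of_le_of_lt (le_trans (degC_mul_le _ _) (degC_mul_le _ _)) ha₂
  -- the four integrality statements
  have hint1a : ∀ i, ∃ z : ℤ, (z : ℚ) = γ₂ * (((n : ℕ) : ℚ) * a₁.coeff i) := by
    intro i
    refine ⟨r.coeff i, ?_⟩
    have := congrArg (fun p => Polynomial.coeff p i) hk1.1
    simpa [coeff_C_mul, coeff_map, hφ] using this.symm
  have hint2a : ∀ i, ∃ z : ℤ, (z : ℚ) = γ₁ * (((n : ℕ) : ℚ) * a₂.coeff i) := by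
    intro i
    refine ⟨r'.coeff i, ?_⟩
    have := congrArg (fun p => Polynomial.coeff p i) hk2.1
    simpa [coeff_C_mul, coeff_map, hφ] using this.symm
  -- cross statements
  have hcm2 : C γ₂ * c = q.map φ := by linear_combination -hk1.2
  have hcm1 : C γ₁ * c = -(q'.map φ) := by linear_combination hk2.2
  have hint1b : C γ₂ * (C ((n : ℕ) : ℚ) * a₂) = (C (f₂.leadingCoeff ^ k) * b₂ + q * f₁).map φ := by
    rw [Polynomial.map_add, Polynomial.map_mul, Polynomial.map_mul, hmapC₂]
    linear_combination C γ₂ * hca₂ + F₁ * hcm2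
  have hint2b : C γ₁ * (C ((n : ℕ) : ℚ) * a₁) = (C (f₁.leadingCoeff ^ m) * b₁ + q' * f₂).map φ := by
    rw [Polynomial.map_add, Polynomial.map_mul, Polynomial.map_mul, hmapC₁]
    linear_combination -C γ₁ * hc - F₂ * hcm1
  have hint1a' : ∀ i, ∃ z : ℤ, (z : ℚ) = γ₁ * (((n : ℕ) : ℚ) * a₁.coeff i) := by
    intro i
    refine ⟨(C (f₁.leadingCoeff ^ m) * b₁ + q' * f₂).coeff i, ?_⟩
    have := congrArg (fun p => Polynomial.coeff p i) hint2b
    simp only [coeff_C_mul, coeff_map, hφ, Int.coe_castRingHom] at this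
    exact this.symm
  have hint2a' : ∀ i, ∃ z : ℤ, (z : ℚ) = γ₂ * (((n : ℕ) : ℚ) * a₂.coeff i) := by
    intro i
    refine ⟨(C (f₂.leadingCoeff ^ k) * b₂ + q * f₁).coeff i, ?_⟩
    have := congrArg (fun p => Polynomial.coeff p i) hint1b
    simp only [coeff_C_mul, coeff_map, hφ, Int.coe_castRingHom] at this
    exact this.symm
  -- combine coprimality
  have hcopow : IsCoprime (f₁.leadingCoeff ^ m) (f₂.leadingCoeff ^ k) := hlead.pow
  have hintfin : ∀ (a : Polynomial ℚ),
      (∀ i, ∃ z : ℤ, (z : ℚ) = γ₁ * (((n : ℕ) : ℚ) * a.coeff i)) →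
      (∀ i, ∃ z : ℤ, (z : ℚ) = γ₂ * (((n : ℕ) : ℚ) * a.coeff i)) →
      ∀ i, (a.coeff i).den ∣ n := by
    intro a h1 h2 i
    have hx : ∃ z : ℤ, (z : ℚ) = ((n : ℕ) : ℚ) * a.coeff i := by
      apply coprime_combine _ _ hcopow
      · obtain ⟨z, hz⟩ := h1 i
        exact ⟨z, by rw [hz]; push_cast [hγ₁]; ring⟩
      · obtain ⟨z, hz⟩ := h2 i
        exact ⟨z, by rw [hz]; push_cast [hγ₂]; ring⟩
    obtain ⟨z, hz⟩ := hx
    exact den_dvd_of_int_mul _ n hn0 z hz.symm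
  have hdv1 : d₁ ∣ n := Finset.lcm_dvd fun i _ => hintfin a₁ hint1a' hint1a i
  have hdv2 : d₂ ∣ n := Finset.lcm_dvd fun i _ => hintfin a₂ hint2a hint2a' i
  have hdn : d ∣ n := Nat.lcm_dvd hdv1 hdv2
  exact Nat.dvd_antisymm hnd hdn
end

section
/- Every positive definite 2×2 Hermitian matrix M over the Gaussian integers ℤ[i] with determinant 1 represents 1; that is, there exists a nonzero vector v ∈ ℤ[i]² with v*Mv = 1. -/
open GaussianInt Matrix
open scoped ComplexOrder

namespace GaussHermAux

open Complex

local notation "ℤ[i]" => GaussianInt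

lemma normSq_div_sub_div_le_half (x y : ℤ[i]) :
    Complex.normSq ((x / y : ℂ) - ((x / y : ℤ[i]) : ℂ)) ≤ 1/2 :=
  calc
    Complex.normSq ((x / y : ℂ) - ((x / y : ℤ[i]) : ℂ))
    _ = Complex.normSq
      ((x / y : ℂ).re - ((x / y : ℤ[i]) : ℂ).re + ((x / y : ℂ).im - ((x / y : ℤ[i]) : ℂ).im) *
        I : ℂ) :=
      congr_arg _ <| by apply Complex.ext <;> simp
    _ ≤ Complex.normSq (1 / 2 + 1 / 2 * I) := by
      have : |(2⁻¹ : ℝ)| = 2⁻¹ := abs_of_nonneg (by norm_num)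
      exact normSq_le_normSq_of_re_le_of_im_le
        (by rw [toComplex_re_div]; simp [normSq, this]; simpa using abs_sub_round (x / y : ℂ).re)
        (by rw [toComplex_im_div]; simp [normSq, this]; simpa using abs_sub_round (x / y : ℂ).im)
    _ ≤ 1/2 := by simp [normSq]; norm_num

lemma two_norm_mod_le (x : ℤ[i]) {y : ℤ[i]} (hy : y ≠ 0) :
    2 * (x % y).norm ≤ y.norm := by
  have hyc : (y : ℂ) ≠ 0 := by rwa [Ne, ← toComplex_zero, toComplex_inj]
  have key : ((Zsqrtd.norm (x % y) : ℤ) : ℝ) ≤ (Zsqrtd.norm y : ℝ) * (1/2) := by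
    calc
      ((Zsqrtd.norm (x % y) : ℤ) : ℝ) = Complex.normSq (x - y * (x / y : ℤ[i]) : ℂ) := by
        simp [GaussianInt.mod_def]
      _ = Complex.normSq (y : ℂ) * Complex.normSq (x / y - (x / y : ℤ[i]) : ℂ) := by
        rw [← normSq_mul, mul_sub, mul_div_cancel₀ _ hyc]
      _ ≤ Complex.normSq (y : ℂ) * (1/2) := by
        apply mul_le_mul_of_nonneg_left (normSq_div_sub_div_le_half _ _) (normSq_nonneg _)
      _ = (Zsqrtd.norm y : ℝ) * (1/2) := by simp
  have : ((2 * (x % y).norm : ℤ) : ℝ) ≤ ((y.norm : ℤ) : ℝ) := by push_cast; linarith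
  exact_mod_cast this

lemma quad_transform (M P : Matrix (Fin 2) (Fin 2) ℤ[i]) (w : Fin 2 → ℤ[i]) :
    star w ⬝ᵥ (Pᴴ * M * P).mulVec w
      = star (P.mulVec w) ⬝ᵥ M.mulVec (P.mulVec w) := by
  simp [Matrix.mulVec, Matrix.mul_apply, dotProduct, Fin.sum_univ_two,
    Matrix.conjTranspose_apply, star_add, star_mul', mul_add, add_mul]
  ring

lemma quad_e0 (M : Matrix (Fin 2) (Fin 2) ℤ[i]) :
    star ![(1:ℤ[i]),0] ⬝ᵥ M.mulVec ![1,0] = M 0 0 := by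
  simp [Matrix.mulVec, dotProduct, Fin.sum_univ_two]

lemma quad_x1 (M : Matrix (Fin 2) (Fin 2) ℤ[i]) (x : ℤ[i]) :
    star ![x,1] ⬝ᵥ M.mulVec ![x,1]
      = star x * (M 0 0 * x + M 0 1) + (M 1 0 * x + M 1 1) := by
  simp [Matrix.mulVec, dotProduct, Fin.sum_univ_two]

lemma P_mulVec (x : ℤ[i]) (w : Fin 2 → ℤ[i]) :
    (!![x, -1; 1, 0]).mulVec w = ![x * w 0 - w 1, w 0] := by
  funext i
  fin_cases i <;> simp [Matrix.mulVec, dotProduct, Fin.sum_univ_two] <;> ring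

lemma pos_re_of_lt {z : ℤ[i]} (h : 0 < toComplex z) : 0 < z.re ∧ z.im = 0 := by
  rw [Complex.lt_def] at h
  obtain ⟨h1, h2⟩ := h
  constructor
  · have : (0:ℝ) < ((z.re : ℤ) : ℝ) := by simpa using h1
    exact_mod_cast this
  · have : ((z.im : ℤ) : ℝ) = 0 := by simpa using h2.symm
    exact_mod_cast this

lemma aux : ∀ n : ℕ, ∀ M : Matrix (Fin 2) (Fin 2) ℤ[i],
    Mᴴ = M → M.det = 1 →
    (∀ v : Fin 2 → ℤ[i], v ≠ 0 → 0 < toComplex (star v ⬝ᵥ M.mulVec v)) →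
    (M 0 0).re.toNat ≤ n →
    ∃ v : Fin 2 → ℤ[i], v ≠ 0 ∧ star v ⬝ᵥ M.mulVec v = 1 := by
  intro n
  induction n using Nat.strong_induction_on with
  | _ n ih =>
    intro M hM hdet hpos hle
    set a := M 0 0 with ha_def
    set b := M 0 1 with hb_def
    set c := M 1 1 with hc_def
    -- a is real
    have ha_star : star a = a := by
      have := congrFun (congrFun hM 0) 0
      simpa [Matrix.conjTranspose_apply] using this
    have ha_im : a.im = 0 := by
      have := congrArg Zsqrtd.im ha_star
      simp [Zsqrtd.im_star] at this
      omega
    have hb : M 1 0 = star b := by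
      have := congrFun (congrFun hM 1) 0
      simp only [Matrix.conjTranspose_apply] at this
      exact this.symm
    -- a positive
    have he0 : (![(1:ℤ[i]),0] : Fin 2 → ℤ[i]) ≠ 0 := by
      intro h; simpa using congrFun h 0
    have hapos : 0 < a.re := by
      have := hpos _ he0
      rw [quad_e0] at this
      exact (pos_re_of_lt this).1
    by_cases h1 : a.re = 1
    · -- M 0 0 = 1
      refine ⟨![1,0], he0, ?_⟩
      rw [quad_e0, ← ha_def]
      rw [Zsqrtd.ext_iff]
      simp [h1, ha_im]
    · -- a.re ≥ 2; descent
      have ha2 : 2 ≤ a.re := by omega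
      have ha0 : a ≠ 0 := by
        intro h; rw [h] at hapos; simp at hapos
      set x : ℤ[i] := -(b / a) with hx_def
      set r : ℤ[i] := b % a with hr_def
      have hr : a * x + b = r := by
        rw [hx_def, hr_def, GaussianInt.mod_def]; ring
      have hsr : star r = a * star x + star b := by
        rw [← hr]
        simp only [star_add, star_mul', ha_star]
      set Q : ℤ[i] := star ![x,1] ⬝ᵥ M.mulVec ![x,1] with hQ_def
      have hQ : Q = star x * (a * x + b) + (star b * x + c) := by
        rw [hQ_def, quad_x1, hb, ← ha_def, ← hb_def, ← hc_def]
      have hdet' : a * c - b * star b = 1 := by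
        rw [← hb]
        rw [Matrix.det_fin_two] at hdet
        linear_combination hdet
      -- key identity
      have key : a * Q = (r.norm : ℤ[i]) + 1 := by
        rw [Zsqrtd.norm_eq_mul_conj, hQ, hsr, ← hr]
        linear_combination hdet'
      -- positivity of Q
      have hv1 : (![x,1] : Fin 2 → ℤ[i]) ≠ 0 := by
        intro h; simpa using congrFun h 1
      obtain ⟨hQpos, hQim⟩ := pos_re_of_lt (hpos _ hv1)
      -- take re of key
      have key_re : a.re * Q.re = r.norm + 1 := by
        have := congrArg Zsqrtd.re key
        simpa [Zsqrtd.re_mul, ha_im, hQim] using this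
      have hnorm_a : a.norm = a.re * a.re := by
        simp [Zsqrtd.norm_def, ha_im]
      have hbound := two_norm_mod_le b ha0
      rw [← hr_def] at hbound
      have hQlt : Q.re < a.re := by nlinarith
      -- the transformation matrix
      set P : Matrix (Fin 2) (Fin 2) ℤ[i] := !![x, -1; 1, 0] with hP_def
      have hPdet : P.det = 1 := by simp [hP_def, Matrix.det_fin_two]
      have hPinj : ∀ w : Fin 2 → ℤ[i], P.mulVec w = 0 → w = 0 := by
        intro w hw
        rw [hP_def, P_mulVec] at hw
        have h0 : w 0 = 0 := by simpa using congrFun hw 1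
        have h1' : x * w 0 - w 1 = 0 := by simpa using congrFun hw 0
        funext i
        fin_cases i
        · exact h0
        · simp only [h0, mul_zero, zero_sub, neg_eq_zero] at h1'
          exact h1'
      set M' : Matrix (Fin 2) (Fin 2) ℤ[i] := Pᴴ * M * P with hM'_def
      have hPv1 : P.mulVec ![1,0] = ![x,1] := by
        rw [hP_def, P_mulVec]
        funext i; fin_cases i <;> simp
      have hM'00 : M' 0 0 = Q := by
        have h := quad_transform M P ![1,0]
        rw [hPv1, ← hQ_def, ← hM'_def] at h
        rw [← quad_e0 M', h]
      have hM' : M'ᴴ = M' := by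
        rw [hM'_def]
        simp [Matrix.conjTranspose_mul, Matrix.mul_assoc, hM]
      have hdetM' : M'.det = 1 := by
        rw [hM'_def]
        simp [Matrix.det_mul, Matrix.det_conjTranspose, hdet, hPdet]
      have hpos' : ∀ v : Fin 2 → ℤ[i], v ≠ 0 → 0 < toComplex (star v ⬝ᵥ M'.mulVec v) := by
        intro v hv
        rw [hM'_def, quad_transform]
        exact hpos _ (fun h => hv (hPinj v h))
      obtain ⟨w, hw0, hw1⟩ := ih Q.re.toNat (by omega) M' hM' hdetM' hpos' (by rw [hM'00])
      refine ⟨P.mulVec w, fun h => hw0 (hPinj w h), ?_⟩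
      rw [← quad_transform, ← hM'_def, hw1]

end GaussHermAux

open GaussHermAux

/-- every positive definite 2×2 Hermitian matrix over the Gaussian
integers with determinant 1 represents 1. -/
theorem gaussian_hermitian_det_one_represents_one
    (M : Matrix (Fin 2) (Fin 2) GaussianInt)
    (hpd : (M.map GaussianInt.toComplex).PosDef)
    (hdet : M.det = 1) :
    ∃ v : Fin 2 → GaussianInt, v ≠ 0 ∧ star v ⬝ᵥ M.mulVec v = 1 := by
  have hM : Mᴴ = M := by
    refine Matrix.ext fun i j => ?_
    have := congrFun (congrFun hpd.1 i) j
    simp only [Matrix.conjTranspose_apply, Matrix.map_apply] at this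
    rw [Matrix.conjTranspose_apply, ← toComplex_inj, toComplex_star]
    exact this
  have hpos : ∀ v : Fin 2 → GaussianInt, v ≠ 0 →
      0 < GaussianInt.toComplex (star v ⬝ᵥ M.mulVec v) := by
    intro v hv
    have hv' : (fun i => GaussianInt.toComplex (v i)) ≠ 0 := by
      intro h
      apply hv
      funext i
      have := congrFun h i
      simpa using toComplex_inj.mp (by simpa using this)
    have := hpd.dotProduct_mulVec_pos hv'
    convert this using 1
    simp [Matrix.mulVec, dotProduct, Fin.sum_univ_two, Matrix.map_apply, toComplex_star]
  exact aux (M 0 0).re.toNat M hM hdet hpos le_rfl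
end

section
/- Every positive definite 2×2 Hermitian matrix M over the Eisenstein integers ℤ[ω] (ω a primitive cube root of unity) with determinant 2 represents 1; that is, there exists a vector v ∈ ℤ[ω]² with v*Mv = 1. -/
open Matrix
open scoped ComplexOrder

def IsE (ω z : ℂ) : Prop := ∃ a b : ℤ, z = (a : ℂ) + (b : ℂ) * ω

lemma IsE.add {ω x y : ℂ} (hx : IsE ω x) (hy : IsE ω y) : IsE ω (x + y) := by
  obtain ⟨a, b, rfl⟩ := hx; obtain ⟨c, d, rfl⟩ := hy
  exact ⟨a + c, b + d, by push_cast; ring⟩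

lemma IsE.mul {ω x y : ℂ} (hq : ω^2 + ω + 1 = 0) (hx : IsE ω x) (hy : IsE ω y) :
    IsE ω (x * y) := by
  obtain ⟨a, b, rfl⟩ := hx; obtain ⟨c, d, rfl⟩ := hy
  exact ⟨a * c - b * d, a * d + b * c - b * d, by push_cast; linear_combination ((b : ℂ) * d) * hq⟩

lemma conj_omega {ω : ℂ} (hre : ω.re = -1/2) :
    (starRingEnd ℂ) ω = -1 - ω := by
  apply Complex.ext <;> simp [hre] <;> norm_num

lemma IsE.star {ω x : ℂ} (hre : ω.re = -1/2) (hx : IsE ω x) : IsE ω (star x) := by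
  obtain ⟨a, b, rfl⟩ := hx
  refine ⟨a - b, -b, ?_⟩
  rw [Complex.star_def, map_add, _root_.map_mul, conj_omega hre, map_intCast, map_intCast]
  push_cast; ring

lemma isE_real {ω z : ℂ} (him : ω.im ≠ 0) (hz : IsE ω z) (hzim : z.im = 0) :
    ∃ n : ℤ, z = (n : ℂ) := by
  obtain ⟨a, b, rfl⟩ := hz
  have h : (b : ℝ) * ω.im = 0 := by simpa using hzim
  have hb : b = 0 := by
    rcases mul_eq_zero.mp h with h | h
    · exact_mod_cast h
    · exact absurd h him
  exact ⟨a, by rw [hb]; push_cast; ring⟩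

lemma isE_approx {ω : ℂ} (him : ω.im ≠ 0) (him2 : ω.im^2 = 3/4)
    (z : ℂ) : ∃ w : ℂ, IsE ω w ∧ Complex.normSq (z - w) ≤ 7/16 := by
  set t := z.im / ω.im with ht
  set b := round t with hb
  set a := round (z.re - (b : ℝ) * ω.re) with ha
  refine ⟨(a : ℂ) + (b : ℂ) * ω, ⟨a, b, rfl⟩, ?_⟩
  have h1' := abs_le.mp (abs_sub_round (z.re - (b : ℝ) * ω.re))
  have h2' := abs_le.mp (abs_sub_round t)
  rw [← ha] at h1'
  rw [← hb] at h2'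
  have hzim : z.im = t * ω.im := (div_mul_cancel₀ z.im him).symm
  have hr : (z - ((a : ℂ) + (b : ℂ) * ω)).re = z.re - (b:ℝ) * ω.re - a := by
    simp [Complex.sub_re, Complex.add_re, Complex.mul_re]; ring
  have hi : (z - ((a : ℂ) + (b : ℂ) * ω)).im = (t - b) * ω.im := by
    simp [Complex.sub_im, Complex.add_im, Complex.mul_im, hzim]; ring
  rw [Complex.normSq_apply, hr, hi]
  have h2sq : (t - (b:ℝ))^2 ≤ 1/4 := by nlinarith [h2'.1, h2'.2]
  nlinarith [h1'.1, h1'.2, sq_nonneg (z.re - (b:ℝ) * ω.re - a)]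

lemma mulE {ω : ℂ} (hq : ω^2 + ω + 1 = 0) {A B : Matrix (Fin 2) (Fin 2) ℂ}
    (hA : ∀ i j, IsE ω (A i j)) (hB : ∀ i j, IsE ω (B i j)) :
    ∀ i j, IsE ω ((A * B) i j) := by
  intro i j
  rw [Matrix.mul_apply, Fin.sum_univ_two]
  exact (IsE.mul hq (hA i 0) (hB 0 j)).add (IsE.mul hq (hA i 1) (hB 1 j))

lemma ctE {ω : ℂ} (hre : ω.re = -1/2) {A : Matrix (Fin 2) (Fin 2) ℂ}
    (hA : ∀ i j, IsE ω (A i j)) : ∀ i j, IsE ω (Aᴴ i j) := by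
  intro i j
  rw [Matrix.conjTranspose_apply]
  exact (hA j i).star hre

lemma form_int {ω : ℂ} (hq : ω^2 + ω + 1 = 0) (him : ω.im ≠ 0) (hre : ω.re = -1/2)
    {M : Matrix (Fin 2) (Fin 2) ℂ} (hent : ∀ i j, IsE ω (M i j)) (hpd : M.PosDef)
    {v : Fin 2 → ℂ} (hvE : ∀ i, IsE ω (v i)) (hv : v ≠ 0) :
    ∃ m : ℤ, 1 ≤ m ∧ star v ⬝ᵥ M.mulVec v = (m : ℂ) := by
  have hpos := hpd.dotProduct_mulVec_pos hv
  have hlt := Complex.lt_def.mp hpos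
  have hqE : IsE ω (star v ⬝ᵥ M.mulVec v) := by
    simp only [Matrix.mulVec, dotProduct, Fin.sum_univ_two, Pi.star_apply]
    exact (IsE.mul hq ((hvE 0).star hre)
        ((IsE.mul hq (hent 0 0) (hvE 0)).add (IsE.mul hq (hent 0 1) (hvE 1)))).add
      (IsE.mul hq ((hvE 1).star hre)
        ((IsE.mul hq (hent 1 0) (hvE 0)).add (IsE.mul hq (hent 1 1) (hvE 1))))
  obtain ⟨m, hm⟩ := isE_real him hqE (by simpa using hlt.2.symm)
  refine ⟨m, ?_, hm⟩
  have : (0:ℝ) < (m:ℝ) := by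
    have := hlt.1
    rw [hm] at this
    simpa using this
  exact_mod_cast this

lemma descent {ω : ℂ} (hq : ω^2 + ω + 1 = 0) (him : ω.im ≠ 0) (hre : ω.re = -1/2)
    (him2 : ω.im^2 = 3/4) :
    ∀ n : ℕ, ∀ M : Matrix (Fin 2) (Fin 2) ℂ,
    (∀ i j, IsE ω (M i j)) → M.PosDef → M.det = 2 → M 0 0 = (n : ℂ) →
    ∃ v : Fin 2 → ℂ, (∀ i, IsE ω (v i)) ∧ star v ⬝ᵥ M.mulVec v = 1 := by
  intro n
  induction n using Nat.strong_induction_on with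
  | _ n IH =>
  intro M hent hpd hdet h00
  have he0 : (![1, 0] : Fin 2 → ℂ) ≠ 0 := by
    intro h; have := congrFun h 0; simp at this
  have hq0 : star (![1,0] : Fin 2 → ℂ) ⬝ᵥ M.mulVec ![1,0] = M 0 0 := by
    simp [Matrix.mulVec, dotProduct, Fin.sum_univ_two]
  have hpos0 : (0:ℂ) < (n:ℂ) := by rw [← h00, ← hq0]; exact hpd.dotProduct_mulVec_pos he0
  have hn1 : 1 ≤ n := by
    rcases Nat.eq_zero_or_pos n with h | h
    · rw [h] at hpos0; norm_num at hpos0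
    · exact h
  rcases eq_or_lt_of_le hn1 with h1 | h2
  · refine ⟨![1,0], ?_, ?_⟩
    · intro i; fin_cases i
      · exact ⟨1, 0, by norm_num⟩
      · exact ⟨0, 0, by norm_num⟩
    · rw [hq0, h00, ← h1]; norm_num
  · -- n ≥ 2
    set b := M 0 1 with hb
    have hM10 : M 1 0 = star b := (hpd.1.apply 1 0).symm
    have hnne : (n:ℂ) ≠ 0 := by positivity
    obtain ⟨x, hxE, hxd⟩ := isE_approx him him2 (-(b / (n:ℂ)))
    set v : Fin 2 → ℂ := ![x, 1] with hv
    have hvE : ∀ i, IsE ω (v i) := by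
      intro i; fin_cases i
      · simpa [hv] using hxE
      · exact ⟨1, 0, by norm_num [hv]⟩
    have hvne : v ≠ 0 := by
      intro h; have := congrFun h 1; simp [hv] at this
    obtain ⟨m, hm1, hmq⟩ := form_int hq him hre hent hpd hvE hvne
    have hqv : star v ⬝ᵥ M.mulVec v
        = star x * M 0 0 * x + star x * M 0 1 + M 1 0 * x + M 1 1 := by
      simp [hv, Matrix.mulVec, dotProduct, Fin.sum_univ_two]; ring
    have hdet2 : (n:ℂ) * M 1 1 - b * star b = 2 := by
      rw [← h00, hb, ← hM10, ← Matrix.det_fin_two]; exact hdet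
    have hsc : star ((n:ℂ) * x + b) = (n:ℂ) * star x + star b := by
      simp [star_add, star_mul', Complex.star_def]
    have hkey : (n : ℂ) * (m : ℂ) = ((n:ℂ) * x + b) * star ((n:ℂ)*x + b) + 2 := by
      rw [← hmq, hqv, h00, hM10, hsc]
      linear_combination hdet2
    have hns : ((n:ℂ)*x + b) * star ((n:ℂ)*x+b) = (Complex.normSq ((n:ℂ)*x+b) : ℂ) :=
      Complex.mul_conj _
    have hreal : (n:ℝ) * (m:ℝ) = Complex.normSq ((n:ℂ)*x+b) + 2 := by
      rw [hns] at hkey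
      exact_mod_cast hkey
    have hbound : Complex.normSq ((n:ℂ)*x + b) ≤ 7/16 * (n:ℝ)^2 := by
      have heq : ((n:ℂ)*x + b) = (-(n:ℂ)) * (-(b/(n:ℂ)) - x) := by
        field_simp; ring
      rw [heq, Complex.normSq_mul]
      have h1 : Complex.normSq (-(n:ℂ)) = (n:ℝ)^2 := by
        simp [Complex.normSq_apply]; ring
      rw [h1]
      nlinarith [Complex.normSq_nonneg (-(b/(n:ℂ)) - x), sq_nonneg (n:ℝ)]
    have hmn : m < (n:ℤ) := by
      by_contra hcon
      push_neg at hcon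
      have hcr : (n:ℝ) ≤ (m:ℝ) := by exact_mod_cast hcon
      have h2r : (2:ℝ) ≤ (n:ℝ) := by exact_mod_cast h2
      nlinarith [hreal, hbound]
    set P : Matrix (Fin 2) (Fin 2) ℂ := !![x, 1; 1, 0] with hP
    set M' := Pᴴ * M * P with hM'
    have hPE : ∀ i j, IsE ω (P i j) := by
      intro i j; fin_cases i <;> fin_cases j
      · simpa [hP] using hxE
      · exact ⟨1, 0, by simp [hP]⟩
      · exact ⟨1, 0, by simp [hP]⟩
      · exact ⟨0, 0, by simp [hP]⟩
    have hM'E : ∀ i j, IsE ω (M' i j) := mulE hq (mulE hq (ctE hre hPE) hent) hPE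
    have hPvec : ∀ y : Fin 2 → ℂ, y ≠ 0 → P.mulVec y ≠ 0 := by
      intro y hy h
      have h0 := congrFun h 0
      have h1 := congrFun h 1
      simp [hP, Matrix.mulVec, dotProduct, Fin.sum_univ_two] at h0 h1
      apply hy
      funext i
      fin_cases i
      · simpa using h1
      · simp only [Pi.zero_apply]
        rw [h1] at h0
        simpa using h0
    have hM'pd : M'.PosDef := by
      refine Matrix.PosDef.of_dotProduct_mulVec_pos ?_ ?_
      · exact Matrix.isHermitian_conjTranspose_mul_mul P hpd.1
      · intro y hy
        have := hpd.dotProduct_mulVec_pos (hPvec y hy)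
        simpa only [hM', star_mulVec, dotProduct_mulVec, vecMul_vecMul, Matrix.mul_assoc]
          using this
    have hdetP : P.det = -1 := by simp [hP, Matrix.det_fin_two_of]
    have hM'det : M'.det = 2 := by
      rw [hM', Matrix.det_mul, Matrix.det_mul, Matrix.det_conjTranspose, hdetP, hdet]
      simp
    have hM'00 : M' 0 0 = ((m.toNat : ℕ) : ℂ) := by
      have hc : M' 0 0 = star v ⬝ᵥ M.mulVec v := by
        simp [hM', hP, hv, Matrix.mul_apply, Matrix.mulVec, dotProduct,
          Fin.sum_univ_two, Matrix.conjTranspose_apply]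
        ring
      rw [hc, hmq]
      have : ((m.toNat : ℤ) : ℂ) = (m : ℂ) := by
        rw [Int.toNat_of_nonneg (by linarith)]
      push_cast at this ⊢
      rw [this]
    have hlt : m.toNat < n := by omega
    obtain ⟨w, hwE, hw1⟩ := IH m.toNat hlt M' hM'E hM'pd hM'det hM'00
    refine ⟨P.mulVec w, ?_, ?_⟩
    · intro i
      have hc : P.mulVec w i = P i 0 * w 0 + P i 1 * w 1 := by
        simp [Matrix.mulVec, dotProduct, Fin.sum_univ_two]
      rw [hc]
      exact (IsE.mul hq (hPE i 0) (hwE 0)).add (IsE.mul hq (hPE i 1) (hwE 1))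
    · rw [← hw1]
      simp only [hM', star_mulVec, dotProduct_mulVec, vecMul_vecMul, Matrix.mul_assoc]

/-- every positive definite 2×2 Hermitian matrix over the Eisenstein
integers `ℤ[ω]` with determinant 2 represents 1.  Here the Eisenstein integers are
realized as the complex numbers of the form `a + bω` with `a, b ∈ ℤ`, where `ω` is a
primitive cube root of unity. -/
theorem eisenstein_hermitian_det_two_represents_one
    (ω : ℂ) (hω : ω ^ 3 = 1) (hω1 : ω ≠ 1)
    (M : Matrix (Fin 2) (Fin 2) ℂ)
    (hent : ∀ i j, ∃ a b : ℤ, M i j = (a : ℂ) + (b : ℂ) * ω)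
    (hpd : M.PosDef)
    (hdet : M.det = 2) :
    ∃ v : Fin 2 → ℂ, (∀ i, ∃ a b : ℤ, v i = (a : ℂ) + (b : ℂ) * ω) ∧
      star v ⬝ᵥ M.mulVec v = 1 := by
  have hq : ω^2 + ω + 1 = 0 := by
    have h : (ω - 1) * (ω^2 + ω + 1) = 0 := by linear_combination hω
    rcases mul_eq_zero.mp h with h | h
    · exact absurd (sub_eq_zero.mp h) hω1
    · exact h
  have hfacts : ω.im ≠ 0 ∧ ω.re = -1/2 ∧ ω.im^2 = 3/4 := by
    have h1 := congrArg Complex.re hq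
    have h2 := congrArg Complex.im hq
    simp [pow_two, Complex.mul_re, Complex.mul_im] at h1 h2
    have him : ω.im ≠ 0 := by intro h; rw [h] at h1; nlinarith [sq_nonneg (ω.re + 1/2)]
    have hre : ω.re = -1/2 := by
      have h3 : ω.im * (ω.re + ω.re + 1) = 0 := by linarith [mul_comm ω.re ω.im]
      have := (mul_eq_zero.mp h3).resolve_left him
      linarith
    exact ⟨him, hre, by nlinarith⟩
  obtain ⟨him, hre, him2⟩ := hfacts
  have hentE : ∀ i j, IsE ω (M i j) := hent
  have he0E : ∀ i, IsE ω ((![1, 0] : Fin 2 → ℂ) i) := by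
    intro i; fin_cases i
    · exact ⟨1, 0, by norm_num⟩
    · exact ⟨0, 0, by norm_num⟩
  have he0 : (![1, 0] : Fin 2 → ℂ) ≠ 0 := by
    intro h; have := congrFun h 0; simp at this
  obtain ⟨k, hk1, hkq⟩ := form_int hq him hre hentE hpd he0E he0
  have hq0 : star (![1,0] : Fin 2 → ℂ) ⬝ᵥ M.mulVec ![1,0] = M 0 0 := by
    simp [Matrix.mulVec, dotProduct, Fin.sum_univ_two]
  have h00 : M 0 0 = ((k.toNat : ℕ) : ℂ) := by
    rw [← hq0, hkq]
    have : ((k.toNat : ℤ) : ℂ) = (k : ℂ) := by rw [Int.toNat_of_nonneg (by linarith)]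
    push_cast at this ⊢
    rw [this]
  obtain ⟨v, hvE, hv1⟩ := descent hq him hre him2 k.toNat M hentE hpd hdet h00
  exact ⟨v, hvE, hv1⟩
end

section
/- Let R be an order in an imaginary quadratic field and let L be a positive definite Hermitian R-lattice of rank n, with underlying ℤ-lattice L_ℤ of rank 2n. Let N₁ ≤ ... ≤ Nₙ be the successive R-minima of L and M₁ ≤ ... ≤ M₂ₙ the successive minima of L_ℤ. Then (N₁ ⋯ Nₙ)² ≤ M₁M₂ ⋯ M₂ₙ. -/
open Matrix Finset
open scoped ComplexOrder

private lemma prod_range_two_mul_aux (M : ℕ → ℕ) :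
    ∀ m : ℕ, ∏ j ∈ Finset.range (2 * m), M j
      = ∏ i ∈ Finset.range m, (M (2 * i) * M (2 * i + 1)) := by
  intro m
  induction m with
  | zero => simp
  | succ m ih =>
      have h2 : 2 * (m + 1) = (2 * m + 1) + 1 := by ring
      rw [h2, Finset.prod_range_succ, Finset.prod_range_succ, ih,
        Finset.prod_range_succ, mul_assoc]

/-- Let `R = ℤ + ℤω` be an order in an imaginary quadratic field (realized
inside `ℂ`) and let `L = Rⁿ ⊆ ℂⁿ` be a positive definite Hermitian `R`-lattice of rank `n`
(with Hermitian form given by a positive definite matrix `A` with entries in `R`, taking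
integer values on the diagonal of the lattice).  If `N₁ ≤ ⋯ ≤ Nₙ` are the successive
`R`-minima of `L` and `M₁ ≤ ⋯ ≤ M₂ₙ` the successive minima of the underlying `ℤ`-lattice
`L_ℤ` of rank `2n`, then `(N₁ ⋯ Nₙ)² ≤ M₁ M₂ ⋯ M₂ₙ`.  Here the `i`-th successive minimum
is the least `d` such that the lattice vectors of length `≤ d` span a space of dimension
`≥ i` over the relevant field (the field of fractions of `R`, equivalently `ℂ`, for the
`R`-minima; `ℚ`, equivalently `ℝ`, for the `ℤ`-minima). -/
theorem successive_minima_hermitian_lattice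
    (n : ℕ) (hn : 0 < n) (R : Subring ℂ)
    (hR : ∃ ω : ℂ, ω.im ≠ 0 ∧ (R : Set ℂ) = {z | ∃ a b : ℤ, z = (a : ℂ) + (b : ℂ) * ω})
    (A : Matrix (Fin n) (Fin n) ℂ) (hA : A.PosDef) (hAR : ∀ i j, A i j ∈ R)
    (hint : ∀ x : Fin n → ℂ, (∀ k, x k ∈ R) →
      ∃ m : ℤ, star x ⬝ᵥ A.mulVec x = (m : ℂ))
    (N M : ℕ → ℕ)
    (hN : ∀ i, N i = sInf {d : ℕ | i + 1 ≤ Module.finrank ℂ (Submodule.span ℂ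
      {x : Fin n → ℂ | (∀ k, x k ∈ R) ∧ (star x ⬝ᵥ A.mulVec x).re ≤ (d : ℝ)})})
    (hM : ∀ j, M j = sInf {d : ℕ | j + 1 ≤ Module.finrank ℝ (Submodule.span ℝ
      {x : Fin n → ℂ | (∀ k, x k ∈ R) ∧ (star x ⬝ᵥ A.mulVec x).re ≤ (d : ℝ)})}) :
    (∏ i ∈ Finset.range n, N i) ^ 2 ≤ ∏ j ∈ Finset.range (2 * n), M j := by
  obtain ⟨ω, hω, hRset⟩ := hR
  set q : (Fin n → ℂ) → ℝ := fun x => (star x ⬝ᵥ A.mulVec x).re with hq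
  set S : ℕ → Set (Fin n → ℂ) := fun d =>
    {x : Fin n → ℂ | (∀ k, x k ∈ R) ∧ (star x ⬝ᵥ A.mulVec x).re ≤ (d : ℝ)} with hSdef
  -- nonnegativity of q
  have hq_nonneg : ∀ x : Fin n → ℂ, 0 ≤ q x := by
    intro x
    have h := hA.posSemidef.dotProduct_mulVec_nonneg x
    simpa [hq, Complex.le_def] using (Complex.le_def.mp h).1
  -- ω ∈ R and 1 ∈ R
  have hωR : ω ∈ R := by
    have : ω ∈ (R : Set ℂ) := by
      rw [hRset]; exact ⟨0, 1, by simp⟩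
    exact this
  -- basic vectors
  have hsingle_mem : ∀ (k : Fin n) (c : ℂ), c ∈ R → ∀ j, (Pi.single k c : Fin n → ℂ) j ∈ R := by
    intro k c hc j
    rcases eq_or_ne j k with h | h
    · subst h; simpa using hc
    · simp [Pi.single_apply, h, R.zero_mem]
  -- choose d0 with all 2n basis vectors inside S d0
  set d0 : ℕ := ⌈(∑ k : Fin n, q (Pi.single k 1)) + (∑ k : Fin n, q (Pi.single k ω))⌉₊ with hd0
  have hsum1 : ∀ k : Fin n, q (Pi.single k 1) ≤ (d0 : ℝ) := by
    intro k
    refine le_trans ?_ (Nat.le_ceil _)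
    have h1 : q (Pi.single k 1) ≤ ∑ i : Fin n, q (Pi.single i 1) :=
      Finset.single_le_sum (f := fun i : Fin n => q (Pi.single i 1))
        (fun i _ => hq_nonneg (Pi.single i 1)) (Finset.mem_univ k)
    have h2 : (0:ℝ) ≤ ∑ k : Fin n, q (Pi.single k ω) :=
      Finset.sum_nonneg fun i _ => hq_nonneg _
    linarith
  have hsumω : ∀ k : Fin n, q (Pi.single k ω) ≤ (d0 : ℝ) := by
    intro k
    refine le_trans ?_ (Nat.le_ceil _)
    have h1 : q (Pi.single k ω) ≤ ∑ i : Fin n, q (Pi.single i ω) :=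
      Finset.single_le_sum (f := fun i : Fin n => q (Pi.single i ω))
        (fun i _ => hq_nonneg (Pi.single i ω)) (Finset.mem_univ k)
    have h2 : (0:ℝ) ≤ ∑ k : Fin n, q (Pi.single k 1) :=
      Finset.sum_nonneg fun i _ => hq_nonneg _
    linarith
  have hv_mem : ∀ k : Fin n, Pi.single k (1:ℂ) ∈ S d0 := fun k =>
    ⟨hsingle_mem k 1 R.one_mem, hsum1 k⟩
  have hw_mem : ∀ k : Fin n, Pi.single k ω ∈ S d0 := fun k =>
    ⟨hsingle_mem k ω hωR, hsumω k⟩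
  -- the real span of S d0 is everything
  have hspan_top : Submodule.span ℝ (S d0) = ⊤ := by
    rw [eq_top_iff]
    intro x _
    have hx : x = ∑ k : Fin n, Pi.single k (x k) := (Finset.univ_sum_single x).symm
    rw [hx]
    refine Submodule.sum_mem _ fun k _ => ?_
    set b : ℝ := (x k).im / ω.im with hb
    set a : ℝ := (x k).re - b * ω.re with ha
    have hdecomp : x k = (a : ℂ) + (b : ℂ) * ω := by
      apply Complex.ext
      · simp [ha]
      · simp [hb]
        field_simp
    have hsingle : (Pi.single k (x k) : Fin n → ℂ)
        = a • (Pi.single k (1:ℂ) : Fin n → ℂ) + b • (Pi.single k ω : Fin n → ℂ) := by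
      rw [hdecomp,
        show ((a:ℂ) + (b:ℂ) * ω) = a • (1:ℂ) + b • ω by simp [Complex.real_smul],
        Pi.single_add, Pi.single_smul, Pi.single_smul]
    rw [hsingle]
    exact Submodule.add_mem _
      (Submodule.smul_mem _ _ (Submodule.subset_span (hv_mem k)))
      (Submodule.smul_mem _ _ (Submodule.subset_span (hw_mem k)))
  -- finrank of total space
  have hfr_total : Module.finrank ℝ (Fin n → ℂ) = 2 * n := by
    rw [Module.finrank_pi_fintype ℝ]
    simp [Complex.finrank_real_complex, mul_comm]
  have hfr_d0 : Module.finrank ℝ (Submodule.span ℝ (S d0)) = 2 * n := by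
    rw [hspan_top, finrank_top, hfr_total]
  -- key inequality: real rank ≤ 2 * complex rank
  have key : ∀ d : ℕ, Module.finrank ℝ (Submodule.span ℝ (S d))
      ≤ 2 * Module.finrank ℂ (Submodule.span ℂ (S d)) := by
    intro d
    have hle : Submodule.span ℝ (S d)
        ≤ (Submodule.span ℂ (S d)).restrictScalars ℝ :=
      Submodule.span_le.2 Submodule.subset_span
    calc Module.finrank ℝ (Submodule.span ℝ (S d))
        ≤ Module.finrank ℝ ((Submodule.span ℂ (S d)).restrictScalars ℝ) :=
          Submodule.finrank_mono hle
      _ = Module.finrank ℝ ℂ * Module.finrank ℂ (Submodule.span ℂ (S d)) :=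
          (Module.finrank_mul_finrank ℝ ℂ (Submodule.span ℂ (S d))).symm
      _ = 2 * Module.finrank ℂ (Submodule.span ℂ (S d)) := by
          rw [Complex.finrank_real_complex]
  -- nonemptiness of the M-sets
  have hMne : ∀ j : ℕ, j < 2 * n →
      ({d : ℕ | j + 1 ≤ Module.finrank ℝ (Submodule.span ℝ (S d))} : Set ℕ).Nonempty := by
    intro j hj
    exact ⟨d0, by simpa [hfr_d0] using hj⟩
  -- N i ≤ M (2 i)
  have hNM : ∀ i : ℕ, i < n → N i ≤ M (2 * i) := by
    intro i hi
    have hne := hMne (2 * i) (by omega)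
    set m := sInf {d : ℕ | 2 * i + 1 ≤ Module.finrank ℝ (Submodule.span ℝ (S d))} with hm
    have hmem : 2 * i + 1 ≤ Module.finrank ℝ (Submodule.span ℝ (S m)) := Nat.sInf_mem hne
    have hC : i + 1 ≤ Module.finrank ℂ (Submodule.span ℂ (S m)) := by
      have := key m; omega
    rw [hN i, hM (2 * i)]
    exact Nat.sInf_le hC
  -- M (2 i) ≤ M (2 i + 1)
  have hMM : ∀ i : ℕ, i < n → M (2 * i) ≤ M (2 * i + 1) := by
    intro i hi
    have hne := hMne (2 * i + 1) (by omega)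
    have hmem := Nat.sInf_mem hne
    rw [hM (2 * i), hM (2 * i + 1)]
    refine Nat.sInf_le ?_
    exact Nat.le_of_succ_le hmem
  -- conclude
  calc (∏ i ∈ Finset.range n, N i) ^ 2
      = ∏ i ∈ Finset.range n, (N i * N i) := by
        rw [sq, ← Finset.prod_mul_distrib]
    _ ≤ ∏ i ∈ Finset.range n, (M (2 * i) * M (2 * i + 1)) := by
        refine Finset.prod_le_prod' fun i hi => ?_
        have hi' : i < n := Finset.mem_range.mp hi
        exact Nat.mul_le_mul (hNM i hi')
          (le_trans (hNM i hi') (hMM i hi'))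
    _ = ∏ j ∈ Finset.range (2 * n), M j := (prod_range_two_mul_aux M n).symm
end
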